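/- arXiv:2309.11708 — 14 statements merged into one kernel-verified Lean document; each statement's English description precedes it below -/
import Mathlib

section
/- Let Λ be a real 4×4 matrix satisfying Λᵀ η Λ = η and Λ₀₀ ≥ 1 (an orthochronous Lorentz transformation). If K = (ω, k) ∈ ℂ × ℂ³ satisfies Im ω ≤ |Im k|, then (ω′, k′) = ΛK satisfies Im ω′ ≤ |Im k′|. In other words, the updated stability criterion Im ω ≤ |Im k| is preserved pointwise under every orthochronous Lorentz transformation. -/
open Matrix

/-- The Minkowski metric `η = diag(1,-1,-1,-1)` on `ℝ⁴`. -/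
noncomputable def minkowskiEta : Matrix (Fin 4) (Fin 4) ℝ :=
  Matrix.diagonal ![1, -1, -1, -1]

lemma eta_sq : minkowskiEta * minkowskiEta = 1 := by
  ext i j
  fin_cases i <;> fin_cases j <;>
    simp [minkowskiEta, Matrix.mul_apply, Fin.sum_univ_four, Matrix.diagonal, Matrix.one_apply]

lemma eta_transpose : minkowskiEtaᵀ = minkowskiEta := Matrix.diagonal_transpose _

lemma quad_eq (v : Fin 4 → ℝ) :
    v ⬝ᵥ (minkowskiEta *ᵥ v) = v 0 ^ 2 - ∑ i : Fin 3, v i.succ ^ 2 := by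
  simp [dotProduct, Matrix.mulVec, minkowskiEta, Matrix.diagonal, Fin.sum_univ_four,
    Fin.sum_univ_three, show (Fin.succ 2 : Fin 4) = 3 from rfl,
    show (Fin.succ 1 : Fin 4) = 2 from rfl, show (Fin.succ 0 : Fin 4) = 1 from rfl]
  ring

lemma key (L : Matrix (Fin 4) (Fin 4) ℝ)
    (hL : Lᵀ * minkowskiEta * L = minkowskiEta)
    (hrow : L 0 0 ^ 2 - ∑ i : Fin 3, L 0 i.succ ^ 2 = 1)
    (h00 : 1 ≤ L 0 0) (v : Fin 4 → ℝ)
    (hv : Real.sqrt (∑ i : Fin 3, v i.succ ^ 2) < v 0) :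
    Real.sqrt (∑ i : Fin 3, (L *ᵥ v) i.succ ^ 2) < (L *ᵥ v) 0 := by
  set a := v 0 with ha
  set b := Real.sqrt (∑ i : Fin 3, v i.succ ^ 2) with hb
  have hbnn : 0 ≤ b := Real.sqrt_nonneg _
  have hapos : 0 < a := lt_of_le_of_lt hbnn hv
  have hb2 : b ^ 2 = ∑ i : Fin 3, v i.succ ^ 2 :=
    Real.sq_sqrt (Finset.sum_nonneg fun _ _ => sq_nonneg _)
  -- quadratic form preserved
  have hq : (L *ᵥ v) ⬝ᵥ (minkowskiEta *ᵥ (L *ᵥ v)) = v ⬝ᵥ (minkowskiEta *ᵥ v) := by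
    rw [Matrix.mulVec_mulVec, Matrix.dotProduct_mulVec, Matrix.vecMul_mulVec]
    rw [← Matrix.mul_assoc, hL]
    rw [← Matrix.dotProduct_mulVec]
  rw [quad_eq, quad_eq] at hq
  -- w 0 positivity
  set w := L *ᵥ v with hw
  have hw0 : w 0 = L 0 0 * a + ∑ i : Fin 3, L 0 i.succ * v i.succ := by
    simp [hw, Matrix.mulVec, dotProduct, Fin.sum_univ_succ, ha]
  set c := Real.sqrt (L 0 0 ^ 2 - 1) with hc
  have hc2 : c ^ 2 = L 0 0 ^ 2 - 1 := Real.sq_sqrt (by nlinarith)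
  have hcle : c ≤ L 0 0 := by
    rw [hc]
    calc Real.sqrt (L 0 0 ^ 2 - 1) ≤ Real.sqrt (L 0 0 ^ 2) := Real.sqrt_le_sqrt (by linarith)
      _ = L 0 0 := Real.sqrt_sq (by linarith)
  have hCS : (∑ i : Fin 3, L 0 i.succ * v i.succ) ^ 2 ≤ (c * b) ^ 2 := by
    calc (∑ i : Fin 3, L 0 i.succ * v i.succ) ^ 2
        ≤ (∑ i : Fin 3, L 0 i.succ ^ 2) * ∑ i : Fin 3, v i.succ ^ 2 :=
          Finset.sum_mul_sq_le_sq_mul_sq _ _ _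
      _ = (c * b) ^ 2 := by rw [mul_pow, hc2, hb2]; ring_nf; nlinarith [hrow]
  have habs : |∑ i : Fin 3, L 0 i.succ * v i.succ| ≤ c * b := by
    have hcb : 0 ≤ c * b := mul_nonneg (Real.sqrt_nonneg _) hbnn
    rw [← Real.sqrt_sq_eq_abs]
    exact (Real.sqrt_le_sqrt hCS).trans_eq (Real.sqrt_sq hcb)
  have hw0pos : 0 < w 0 := by
    have h1 : c * b ≤ L 0 0 * b := mul_le_mul_of_nonneg_right hcle hbnn
    have h2 : L 0 0 * b < L 0 0 * a := by
      exact mul_lt_mul_of_pos_left hv (by linarith)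
    have := neg_abs_le (∑ i : Fin 3, L 0 i.succ * v i.succ)
    rw [hw0]
    nlinarith [abs_nonneg (∑ i : Fin 3, L 0 i.succ * v i.succ)]
  have hlt : ∑ i : Fin 3, w i.succ ^ 2 < w 0 ^ 2 := by nlinarith
  exact (Real.sqrt_lt' hw0pos).2 hlt

lemma row_cond (M : Matrix (Fin 4) (Fin 4) ℝ)
    (h : M * minkowskiEta * Mᵀ = minkowskiEta) :
    M 0 0 ^ 2 - ∑ i : Fin 3, M 0 i.succ ^ 2 = 1 := by
  have h00 := congrFun (congrFun h 0) 0
  simp [Matrix.mul_apply, minkowskiEta, Matrix.diagonal, Fin.sum_univ_four, Fin.sum_univ_three,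
    Matrix.transpose_apply, show (Fin.succ 2 : Fin 4) = 3 from rfl,
    show (Fin.succ 1 : Fin 4) = 2 from rfl, show (Fin.succ 0 : Fin 4) = 1 from rfl] at h00 ⊢
  nlinarith [h00]

/-- If `Λ` is an orthochronous Lorentz transformation
(`Λᵀ η Λ = η` and `Λ₀₀ ≥ 1`) and the complex four-vector `K = (ω, k)` satisfies the updated
stability criterion `Im ω ≤ |Im k|`, then the transformed vector `K' = ΛK = (ω', k')` also
satisfies `Im ω' ≤ |Im k'|`. -/
theorem stability_criterion_preserved_by_orthochronous_lorentz
    (Λ : Matrix (Fin 4) (Fin 4) ℝ)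
    (hΛ : Λᵀ * minkowskiEta * Λ = minkowskiEta) (hortho : 1 ≤ Λ 0 0)
    (K : Fin 4 → ℂ)
    (hK : (K 0).im ≤ Real.sqrt (∑ i : Fin 3, (K i.succ).im ^ 2)) :
    ((Λ.map (Complex.ofReal) *ᵥ K) 0).im
      ≤ Real.sqrt (∑ i : Fin 3, ((Λ.map (Complex.ofReal) *ᵥ K) i.succ).im ^ 2) := by
  set v : Fin 4 → ℝ := fun i => (K i).im with hv
  have hIm : ∀ j, ((Λ.map (Complex.ofReal) *ᵥ K) j).im = (Λ *ᵥ v) j := by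
    intro j
    simp [Matrix.mulVec, dotProduct, Matrix.map_apply, Complex.im_sum, hv]
  simp only [hIm]
  set L : Matrix (Fin 4) (Fin 4) ℝ := minkowskiEta * Λᵀ * minkowskiEta with hLdef
  have hηη : ∀ X : Matrix (Fin 4) (Fin 4) ℝ, minkowskiEta * (minkowskiEta * X) = X := by
    intro X; rw [← Matrix.mul_assoc, eta_sq, Matrix.one_mul]
  have hLΛ : L * Λ = 1 := by
    rw [hLdef, Matrix.mul_assoc, Matrix.mul_assoc, ← Matrix.mul_assoc Λᵀ, hΛ, eta_sq]
  have hLT : Lᵀ = minkowskiEta * Λ * minkowskiEta := by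
    rw [hLdef, Matrix.transpose_mul, Matrix.transpose_mul, eta_transpose,
      Matrix.transpose_transpose, Matrix.mul_assoc]
  have hLη : L * minkowskiEta = minkowskiEta * Λᵀ := by
    rw [hLdef, Matrix.mul_assoc, eta_sq, Matrix.mul_one]
  have hLTη : Lᵀ * minkowskiEta = minkowskiEta * Λ := by
    rw [hLT, Matrix.mul_assoc, eta_sq, Matrix.mul_one]
  have hΛL : Λ * L = 1 := mul_eq_one_comm.mpr hLΛ
  have hflip : Λ * minkowskiEta * Λᵀ = minkowskiEta := by
    calc Λ * minkowskiEta * Λᵀ = Λ * (minkowskiEta * Λᵀ) := Matrix.mul_assoc ..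
      _ = Λ * (L * minkowskiEta) := by rw [hLη]
      _ = (Λ * L) * minkowskiEta := (Matrix.mul_assoc ..).symm
      _ = minkowskiEta := by rw [hΛL, Matrix.one_mul]
  have hLlorentz : Lᵀ * minkowskiEta * L = minkowskiEta := by
    calc Lᵀ * minkowskiEta * L = (minkowskiEta * Λ) * L := by rw [hLTη]
      _ = minkowskiEta * ((Λ * minkowskiEta * Λᵀ) * minkowskiEta) := by
          rw [hLdef]; simp only [Matrix.mul_assoc]
      _ = minkowskiEta := by rw [hflip, eta_sq, Matrix.mul_one]
  have hLrow : L 0 0 ^ 2 - ∑ i : Fin 3, L 0 i.succ ^ 2 = 1 := by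
    apply row_cond
    calc L * minkowskiEta * Lᵀ = (minkowskiEta * Λᵀ) * Lᵀ := by rw [hLη]
      _ = minkowskiEta * ((Λᵀ * minkowskiEta * Λ) * minkowskiEta) := by
          rw [hLT]; simp only [Matrix.mul_assoc]
      _ = minkowskiEta := by rw [hΛ, eta_sq, Matrix.mul_one]
  have hL00 : L 0 0 = Λ 0 0 := by
    simp [hLdef, Matrix.mul_apply, minkowskiEta, Matrix.diagonal, Fin.sum_univ_four,
      Matrix.transpose_apply]
  by_contra hcon
  push_neg at hcon
  have := key L hLlorentz hLrow (hL00 ▸ hortho) (Λ *ᵥ v) hcon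
  rw [Matrix.mulVec_mulVec, hLΛ, Matrix.one_mulVec] at this
  exact absurd hK (not_le.2 this)
end

section
/- Let ω ∈ ℂ and k ∈ ℂ³ with Im k ≠ 0 and Im ω > |Im k|. Set v = (Im k)/(Im ω) ∈ ℝ³ and γ = (1 − |v|²)^{−1/2}. Then 0 < |v| < 1, and the Lorentz boost Λ(v), defined by ω′ = γ(ω − v·k) and k′ = k + ((γ − 1)(v·k)/|v|² − γω)v, satisfies Im k′ = 0 and Im ω′ = γ^{−1} Im ω > 0. Hence any mode with Im ω > |Im k| in one inertial frame appears as an unstable mode (real wave vector, positive imaginary frequency) in a boosted frame. -/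
/-!
Choose the boost velocity parallel to `Im k`, namely `v = Im k / Im ω`, so that `Im k = (Im ω) v`.
Then `Im (v·k) = Im ω |v|²`, and the two terms of `Im k'` along `v` cancel exactly, for every
value of `γ`; likewise `Im ω' = γ (1 - |v|²) Im ω`. The hypothesis `|Im k| < Im ω` is precisely
`|v| < 1`, and for the Lorentz factor `γ (1 - |v|²) = γ⁻¹`.
-/

open Finset Complex

section LorentzBoost

variable {ι : Type*} [Fintype ι]

noncomputable def lorentzBoostFreq (γ : ℝ) (v : ι → ℝ) (ω : ℂ) (k : ι → ℂ) : ℂ :=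
  γ * (ω - ∑ i, (v i : ℂ) * k i)

noncomputable def lorentzBoostWave (γ : ℝ) (v : ι → ℝ) (ω : ℂ) (k : ι → ℂ) (i : ι) : ℂ :=
  k i + ((γ - 1) * (∑ j, (v j : ℂ) * k j) / ((∑ j, v j ^ 2 : ℝ) : ℂ) - γ * ω) * v i

variable {v : ι → ℝ} {ω : ℂ} {k : ι → ℂ}

lemma im_sum_ofReal_mul_of_im_eq (hk : ∀ i, (k i).im = ω.im * v i) :
    (∑ i, (v i : ℂ) * k i).im = ω.im * ∑ i, v i ^ 2 := by
  simp only [im_sum, im_ofReal_mul, hk, mul_sum]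
  exact sum_congr rfl fun i _ => by ring

lemma im_lorentzBoostFreq_of_im_eq (γ : ℝ) (hk : ∀ i, (k i).im = ω.im * v i) :
    (lorentzBoostFreq γ v ω k).im = γ * (1 - ∑ i, v i ^ 2) * ω.im := by
  rw [lorentzBoostFreq, im_ofReal_mul, sub_im, im_sum_ofReal_mul_of_im_eq hk]
  ring

lemma im_lorentzBoostWave_of_im_eq (γ : ℝ) (hv : ∑ i, v i ^ 2 ≠ 0)
    (hk : ∀ i, (k i).im = ω.im * v i) (i : ι) : (lorentzBoostWave γ v ω k i).im = 0 := by
  have hdot : ((γ - 1) * (∑ j, (v j : ℂ) * k j) / ((∑ j, v j ^ 2 : ℝ) : ℂ)).im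
      = (γ - 1) * ω.im := by
    rw [div_ofReal_im, ← ofReal_one, ← ofReal_sub, im_ofReal_mul,
      im_sum_ofReal_mul_of_im_eq hk]
    field_simp
  rw [lorentzBoostWave, add_im, mul_im, ofReal_im, mul_zero, zero_add, sub_im, hdot,
    im_ofReal_mul, ofReal_re, hk]
  ring

end LorentzBoost

lemma rpow_neg_one_div_two_mul_self {x : ℝ} (hx : 0 < x) :
    x ^ (-(1 : ℝ) / 2) * x = (x ^ (-(1 : ℝ) / 2))⁻¹ := by
  rw [← Real.rpow_neg hx.le, ← Real.rpow_add_one hx.ne']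
  norm_num

lemma sum_div_sq_pos {ι : Type*} [Fintype ι] {b : ι → ℝ} (hb : b ≠ 0) {w : ℝ} (hw : w ≠ 0) :
    0 < ∑ i, (b i / w) ^ 2 := by
  obtain ⟨i, hi⟩ := Function.ne_iff.mp hb
  exact sum_pos' (fun j _ => sq_nonneg _) ⟨i, mem_univ i, sq_pos_of_ne_zero (div_ne_zero hi hw)⟩

lemma sum_div_sq_lt_one {ι : Type*} [Fintype ι] {b : ι → ℝ} {w : ℝ}
    (hb : √(∑ i, b i ^ 2) < w) : ∑ i, (b i / w) ^ 2 < 1 := by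
  have hw : 0 < w := (Real.sqrt_nonneg _).trans_lt hb
  simp only [div_pow, ← sum_div]
  rw [div_lt_one (by positivity), ← Real.sqrt_lt' hw]
  exact hb

/-- Let `ω ∈ ℂ` and `k ∈ ℂ³` with `Im k ≠ 0` and `Im ω > |Im k|`.  Set
`v = (Im k)/(Im ω) ∈ ℝ³` and `γ = (1 − |v|²)^(−1/2)`.  Then `0 < |v| < 1`, and the Lorentz
boost `Λ(v)`, given by `ω' = γ(ω − v·k)` and `k' = k + ((γ − 1)(v·k)/|v|² − γω)v`, yields
`Im k' = 0` and `Im ω' = γ⁻¹ Im ω > 0`: the mode appears as an unstable mode (real wave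
vector, positive imaginary frequency) in the boosted frame. -/
theorem unstable_mode_in_boosted_frame (ω : ℂ) (k : Fin 3 → ℂ)
    (hk : (fun i => (k i).im) ≠ 0)
    (hω : Real.sqrt (∑ i, (k i).im ^ 2) < ω.im)
    (v : Fin 3 → ℝ) (hv : v = fun i => (k i).im / ω.im)
    (γ : ℝ) (hγ : γ = (1 - ∑ i, v i ^ 2) ^ (-(1 : ℝ) / 2))
    (ω' : ℂ) (hω' : ω' = (γ : ℂ) * (ω - ∑ i, (v i : ℂ) * k i))
    (k' : Fin 3 → ℂ)
    (hk' : k' = fun i => k i +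
      (((γ : ℂ) - 1) * (∑ j, (v j : ℂ) * k j) / ((∑ j, v j ^ 2 : ℝ) : ℂ) - (γ : ℂ) * ω)
        * (v i : ℂ)) :
    (0 < Real.sqrt (∑ i, v i ^ 2) ∧ Real.sqrt (∑ i, v i ^ 2) < 1) ∧
      (∀ i, (k' i).im = 0) ∧ ω'.im = γ⁻¹ * ω.im ∧ 0 < ω'.im := by
  have hωpos : 0 < ω.im := (Real.sqrt_nonneg _).trans_lt hω
  have hk_im : ∀ i, (k i).im = ω.im * v i := fun i => by
    rw [hv]; field_simp
  have hs_pos : 0 < ∑ i, v i ^ 2 := hv ▸ sum_div_sq_pos hk hωpos.ne'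
  have hs_lt : ∑ i, v i ^ 2 < 1 := hv ▸ sum_div_sq_lt_one hω
  have hγ_mul : γ * (1 - ∑ i, v i ^ 2) = γ⁻¹ := hγ ▸ rpow_neg_one_div_two_mul_self (by linarith)
  have hγ_pos : 0 < γ := hγ ▸ by positivity
  have hω'_im : ω'.im = γ⁻¹ * ω.im := by
    rw [hω', ← hγ_mul]
    exact im_lorentzBoostFreq_of_im_eq γ hk_im
  refine ⟨⟨Real.sqrt_pos.mpr hs_pos, by rwa [Real.sqrt_lt' one_pos, one_pow]⟩, ?_, hω'_im, ?_⟩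
  · rw [hk']
    exact im_lorentzBoostWave_of_im_eq γ hs_pos.ne' hk_im
  · rw [hω'_im]
    positivity
end

section
/- Let v ∈ ℝ³ with 0 < |v| < 1, γ = (1 − |v|²)^{−1/2}, and b ≥ 0. If (ω, k) ∈ ℂ × ℂ³ satisfies Im ω ≤ |Im k| + b, then its image (ω′, k′) under the Lorentz boost Λ(v) satisfies Im ω′ ≤ |Im k′| + γ(1 + |v|) b. -/
/-!
Taking imaginary parts commutes with the boost, whose coefficients are real, so it suffices to
treat real `(t, x)`. The boost preserves the Minkowski form `t² - ‖x‖²`, hence also the region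
`t ≤ ‖x‖`: if `t' > 0` then `t > ⟪v, x⟫ ≥ -‖x‖`, so `t² ≤ ‖x‖²` and therefore `t'² ≤ ‖x'‖²`.
For general `b`, split `(t, x) = (t - b, x) + (b, 0)`: the boost sends `(b, 0)` to
`(γ b, -γ b v)`, and the triangle inequality produces the extra `γ (1 + ‖v‖) b`.
-/

open scoped RealInnerProductSpace

noncomputable section Boost

variable {E : Type*} [NormedAddCommGroup E] [InnerProductSpace ℝ E]

def boostTime (γ : ℝ) (v : E) (t : ℝ) (x : E) : ℝ := γ * (t - ⟪v, x⟫)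

def boostSpace (γ : ℝ) (v : E) (t : ℝ) (x : E) : E :=
  x + ((γ - 1) * ⟪v, x⟫ / ‖v‖ ^ 2 - γ * t) • v

variable {γ : ℝ} {v : E}

theorem boostTime_sq_sub_norm_boostSpace_sq (hv : v ≠ 0) (hγ : γ ^ 2 * (1 - ‖v‖ ^ 2) = 1)
    (t : ℝ) (x : E) :
    boostTime γ v t x ^ 2 - ‖boostSpace γ v t x‖ ^ 2 = t ^ 2 - ‖x‖ ^ 2 := by
  have hv2 : ‖v‖ ^ 2 ≠ 0 := by positivity
  rw [boostTime, boostSpace, norm_add_sq_real, norm_smul, inner_smul_right, real_inner_comm v x,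
    Real.norm_eq_abs, mul_pow, mul_pow, sq_abs]
  field_simp
  linear_combination (t ^ 2 * ‖v‖ ^ 2 - ⟪v, x⟫ ^ 2) * hγ

theorem boostTime_le_norm_boostSpace (hv : v ≠ 0) (hγ0 : 0 < γ)
    (hγ : γ ^ 2 * (1 - ‖v‖ ^ 2) = 1) {t : ℝ} {x : E} (h : t ≤ ‖x‖) :
    boostTime γ v t x ≤ ‖boostSpace γ v t x‖ := by
  rcases le_or_gt (boostTime γ v t x) 0 with hle | hpos
  · exact hle.trans (norm_nonneg _)
  have hv1 : ‖v‖ ≤ 1 := by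
    have : 0 < 1 - ‖v‖ ^ 2 := pos_of_mul_pos_right (by rw [hγ]; exact one_pos) (sq_nonneg γ)
    nlinarith [norm_nonneg v]
  have hinner : ⟪v, x⟫ < t := by
    rw [boostTime] at hpos
    nlinarith
  have hneg : -‖x‖ ≤ t := by
    nlinarith [neg_abs_le ⟪v, x⟫, abs_real_inner_le_norm v x, norm_nonneg x]
  have hsq : boostTime γ v t x ^ 2 ≤ ‖boostSpace γ v t x‖ ^ 2 := by
    nlinarith [boostTime_sq_sub_norm_boostSpace_sq hv hγ t x, sq_le_sq' hneg h]
  exact (pow_le_pow_iff_left₀ hpos.le (norm_nonneg _) two_ne_zero).mp hsq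

theorem boostTime_le_norm_boostSpace_add (hv : v ≠ 0) (hγ0 : 0 < γ)
    (hγ : γ ^ 2 * (1 - ‖v‖ ^ 2) = 1) {b t : ℝ} {x : E} (hb : 0 ≤ b) (h : t ≤ ‖x‖ + b) :
    boostTime γ v t x ≤ ‖boostSpace γ v t x‖ + γ * (1 + ‖v‖) * b := by
  have hshift : boostSpace γ v (t - b) x = boostSpace γ v t x + (γ * b) • v := by
    rw [boostSpace, boostSpace, add_assoc, ← add_smul]
    ring_nf
  calc boostTime γ v t x = boostTime γ v (t - b) x + γ * b := by
        rw [boostTime, boostTime]; ring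
    _ ≤ ‖boostSpace γ v (t - b) x‖ + γ * b := by
        gcongr
        exact boostTime_le_norm_boostSpace hv hγ0 hγ (by linarith)
    _ ≤ ‖boostSpace γ v t x‖ + γ * b * ‖v‖ + γ * b := by
        rw [hshift]
        gcongr
        refine (norm_add_le _ _).trans_eq ?_
        rw [norm_smul, Real.norm_of_nonneg (by positivity)]
    _ = ‖boostSpace γ v t x‖ + γ * (1 + ‖v‖) * b := by ring

end Boost

theorem rpow_neg_half_sq_mul {x : ℝ} (hx : 0 < x) : (x ^ (-(1 : ℝ) / 2)) ^ 2 * x = 1 := by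
  rw [← Real.rpow_natCast, ← Real.rpow_mul hx.le]
  norm_num [Real.rpow_neg_one, hx.ne']

theorem EuclideanSpace.norm_toLp_real {ι : Type*} [Fintype ι] (x : ι → ℝ) :
    ‖WithLp.toLp 2 x‖ = √(∑ i, x i ^ 2) := by
  simp [EuclideanSpace.norm_eq]

/-- Let `v ∈ ℝ³` with `0 < |v| < 1`, `γ = (1 − |v|²)^(−1/2)`, and `b ≥ 0`.
If `(ω, k) ∈ ℂ × ℂ³` satisfies `Im ω ≤ |Im k| + b`, then its image `(ω', k')` under the
Lorentz boost `Λ(v)`, given by `ω' = γ(ω − v·k)` and `k' = k + ((γ − 1)(v·k)/|v|² − γω)v`,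
satisfies `Im ω' ≤ |Im k'| + γ(1 + |v|)b`. -/
theorem causality_bound_under_boost (v : Fin 3 → ℝ)
    (hv0 : 0 < Real.sqrt (∑ i, v i ^ 2)) (hv1 : Real.sqrt (∑ i, v i ^ 2) < 1)
    (γ : ℝ) (hγ : γ = (1 - ∑ i, v i ^ 2) ^ (-(1 : ℝ) / 2))
    (b : ℝ) (hb : 0 ≤ b) (ω : ℂ) (k : Fin 3 → ℂ)
    (h : ω.im ≤ Real.sqrt (∑ i, (k i).im ^ 2) + b)
    (ω' : ℂ) (hω' : ω' = (γ : ℂ) * (ω - ∑ i, (v i : ℂ) * k i))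
    (k' : Fin 3 → ℂ)
    (hk' : k' = fun i => k i +
      (((γ : ℂ) - 1) * (∑ j, (v j : ℂ) * k j) / ((∑ j, v j ^ 2 : ℝ) : ℂ) - (γ : ℂ) * ω)
        * (v i : ℂ)) :
    ω'.im ≤ Real.sqrt (∑ i, (k' i).im ^ 2) + γ * (1 + Real.sqrt (∑ i, v i ^ 2)) * b := by
  set V : EuclideanSpace ℝ (Fin 3) := WithLp.toLp 2 v
  set X : EuclideanSpace ℝ (Fin 3) := WithLp.toLp 2 fun i => (k i).im
  have hV : ‖V‖ = √(∑ i, v i ^ 2) := EuclideanSpace.norm_toLp_real v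
  have hV2 : ‖V‖ ^ 2 = ∑ i, v i ^ 2 := EuclideanSpace.real_norm_sq_eq V
  have hVX : ⟪V, X⟫ = ∑ i, v i * (k i).im := by
    simp [V, X, EuclideanSpace.inner_toLp_toLp, dotProduct, mul_comm]
  have hV0 : V ≠ 0 := norm_pos_iff.mp (hV ▸ hv0)
  have hV1 : 0 < 1 - ∑ i, v i ^ 2 := by nlinarith [norm_nonneg V]
  have hγ0 : 0 < γ := hγ ▸ Real.rpow_pos_of_pos hV1 _
  have hγ2 : γ ^ 2 * (1 - ‖V‖ ^ 2) = 1 := by rw [hγ, hV2]; exact rpow_neg_half_sq_mul hV1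
  have hω'im : ω'.im = boostTime γ V ω.im X := by simp [hω', boostTime, hVX]
  have hk'im : ∀ i, (k' i).im = boostSpace γ V ω.im X i := by
    intro i
    simp [hk', boostSpace, hVX, hV2, Complex.mul_im, -Complex.ofReal_sum]
    rfl
  have hk'norm : ‖boostSpace γ V ω.im X‖ = √(∑ i, (k' i).im ^ 2) := by
    simp [EuclideanSpace.norm_eq, hk'im]
  rw [hω'im, ← hk'norm, ← hV]
  exact boostTime_le_norm_boostSpace_add hV0 hγ0 hγ2 hb (by rwa [EuclideanSpace.norm_toLp_real])
end

section
/- Let S ⊆ ℂ × ℂ³ and suppose there exists b ∈ ℝ such that every (ω, k) ∈ S satisfies Im ω ≤ |Im k| + b. Then for every real 4×4 matrix Λ with Λᵀ η Λ = η and Λ₀₀ ≥ 1 there exists b″ ∈ ℝ such that every (ω′, k′) = Λ(ω, k) with (ω, k) ∈ S satisfies Im ω′ ≤ |Im k′| + b″. That is, the improved causality criterion holds in all inertial frames whenever it holds in one. -/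
open Matrix

noncomputable def nsp (x : Fin 4 → ℝ) : ℝ := Real.sqrt (∑ i : Fin 3, (x i.succ) ^ 2)

lemma nsp_nonneg (x : Fin 4 → ℝ) : 0 ≤ nsp x := Real.sqrt_nonneg _

lemma nsp_sq (x : Fin 4 → ℝ) : nsp x ^ 2 = ∑ i : Fin 3, (x i.succ) ^ 2 :=
  Real.sq_sqrt (by positivity)

lemma nsp_eq_norm (x : Fin 4 → ℝ) :
    nsp x = ‖(WithLp.equiv 2 (Fin 3 → ℝ)).symm (fun i => x i.succ)‖ := by
  rw [EuclideanSpace.norm_eq]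
  simp [nsp, Real.norm_eq_abs, sq_abs]

lemma nsp_sub_le (a b : Fin 4 → ℝ) : nsp (a - b) ≤ nsp a + nsp b := by
  rw [nsp_eq_norm, nsp_eq_norm, nsp_eq_norm]
  have : (WithLp.equiv 2 (Fin 3 → ℝ)).symm (fun i => (a - b) i.succ)
      = (WithLp.equiv 2 (Fin 3 → ℝ)).symm (fun i => a i.succ)
        - (WithLp.equiv 2 (Fin 3 → ℝ)).symm (fun i => b i.succ) := rfl
  rw [this]
  exact norm_sub_le _ _

lemma nsp_smul (s : ℝ) (a : Fin 4 → ℝ) : nsp (s • a) = |s| * nsp a := by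
  rw [nsp_eq_norm, nsp_eq_norm]
  have : (WithLp.equiv 2 (Fin 3 → ℝ)).symm (fun i => (s • a) i.succ)
      = s • (WithLp.equiv 2 (Fin 3 → ℝ)).symm (fun i => a i.succ) := rfl
  rw [this, norm_smul, Real.norm_eq_abs]

lemma dot_eta (x : Fin 4 → ℝ) :
    x ⬝ᵥ (minkowskiEta *ᵥ x) = x 0 ^ 2 - nsp x ^ 2 := by
  rw [nsp_sq]
  simp [minkowskiEta, mulVec_diagonal, dotProduct, Fin.sum_univ_four, Fin.sum_univ_three,
    show ((0:Fin 3)).succ = 1 from rfl, show ((1:Fin 3)).succ = 2 from rfl,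
    show ((2:Fin 3)).succ = 3 from rfl]
  ring

lemma Q_pres (Λ : Matrix (Fin 4) (Fin 4) ℝ) (hΛ : Λᵀ * minkowskiEta * Λ = minkowskiEta)
    (x : Fin 4 → ℝ) :
    (Λ *ᵥ x) ⬝ᵥ (minkowskiEta *ᵥ (Λ *ᵥ x)) = x ⬝ᵥ (minkowskiEta *ᵥ x) := by
  calc (Λ *ᵥ x) ⬝ᵥ (minkowskiEta *ᵥ (Λ *ᵥ x))
      = (x ᵥ* Λᵀ) ⬝ᵥ ((minkowskiEta * Λ) *ᵥ x) := by rw [vecMul_transpose, mulVec_mulVec]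
    _ = x ⬝ᵥ ((Λᵀ * (minkowskiEta * Λ)) *ᵥ x) := by
        simp [dotProduct_mulVec, vecMul_vecMul, Matrix.mul_assoc]
    _ = x ⬝ᵥ (minkowskiEta *ᵥ x) := by rw [← Matrix.mul_assoc, hΛ]

lemma inv_lorentz (Λ : Matrix (Fin 4) (Fin 4) ℝ) (hΛ : Λᵀ * minkowskiEta * Λ = minkowskiEta) :
    (minkowskiEta * Λᵀ * minkowskiEta) * Λ = 1 ∧
    Λ * (minkowskiEta * Λᵀ * minkowskiEta) = 1 := by
  have h1 : (minkowskiEta * Λᵀ * minkowskiEta) * Λ = 1 := by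
    calc (minkowskiEta * Λᵀ * minkowskiEta) * Λ
        = minkowskiEta * (Λᵀ * minkowskiEta * Λ) := by noncomm_ring
      _ = minkowskiEta * minkowskiEta := by rw [hΛ]
      _ = 1 := eta_sq
  exact ⟨h1, mul_eq_one_comm.mp h1⟩

lemma row_lorentz (Λ : Matrix (Fin 4) (Fin 4) ℝ) (hΛ : Λᵀ * minkowskiEta * Λ = minkowskiEta) :
    Λ * minkowskiEta * Λᵀ = minkowskiEta := by
  have h2 := (inv_lorentz Λ hΛ).2
  calc Λ * minkowskiEta * Λᵀ
      = Λ * (minkowskiEta * Λᵀ * minkowskiEta) * minkowskiEta := by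
        rw [Matrix.mul_assoc, Matrix.mul_assoc, Matrix.mul_assoc, eta_sq, Matrix.mul_one]
    _ = minkowskiEta := by rw [h2, Matrix.one_mul]

lemma row0 (Λ : Matrix (Fin 4) (Fin 4) ℝ) (hΛ : Λᵀ * minkowskiEta * Λ = minkowskiEta) :
    Λ 0 0 ^ 2 - nsp (Λ 0) ^ 2 = 1 := by
  have h := row_lorentz Λ hΛ
  have h00 := congrFun (congrFun h 0) 0
  rw [nsp_sq]
  simp [minkowskiEta, Matrix.mul_apply, Matrix.diagonal_apply, Fin.sum_univ_four,
    Fin.sum_univ_three, Matrix.transpose_apply,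
    show ((0:Fin 3)).succ = 1 from rfl, show ((1:Fin 3)).succ = 2 from rfl,
    show ((2:Fin 3)).succ = 3 from rfl] at h00 ⊢
  linear_combination h00

lemma cone (Λ : Matrix (Fin 4) (Fin 4) ℝ) (hΛ : Λᵀ * minkowskiEta * Λ = minkowskiEta)
    (h0 : 1 ≤ Λ 0 0) (x : Fin 4 → ℝ) (hx : nsp x < x 0) :
    nsp (Λ *ᵥ x) < (Λ *ᵥ x) 0 := by
  have hx0 : 0 < x 0 := lt_of_le_of_lt (nsp_nonneg x) hx
  have hQ : (Λ *ᵥ x) 0 ^ 2 - nsp (Λ *ᵥ x) ^ 2 = x 0 ^ 2 - nsp x ^ 2 := by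
    have := Q_pres Λ hΛ x
    rwa [dot_eta, dot_eta] at this
  have hQpos : 0 < x 0 ^ 2 - nsp x ^ 2 := by
    nlinarith [nsp_nonneg x]
  -- Cauchy-Schwarz on the spatial part of row 0
  have hCS : (∑ i : Fin 3, Λ 0 i.succ * x i.succ) ^ 2 ≤ nsp (Λ 0) ^ 2 * nsp x ^ 2 := by
    rw [nsp_sq, nsp_sq]
    exact Finset.sum_mul_sq_le_sq_mul_sq _ _ _
  have hrow := row0 Λ hΛ
  have hsplit : (Λ *ᵥ x) 0 = Λ 0 0 * x 0 + ∑ i : Fin 3, Λ 0 i.succ * x i.succ := by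
    simp [Matrix.mulVec, dotProduct, Fin.sum_univ_succ, Fin.sum_univ_three]
  have hpos : 0 < (Λ *ᵥ x) 0 := by
    rw [hsplit]
    nlinarith [nsp_nonneg (Λ 0), nsp_nonneg x, hCS, hrow,
      mul_pos (lt_of_lt_of_le one_pos h0) hx0,
      sq_nonneg (∑ i : Fin 3, Λ 0 i.succ * x i.succ + Λ 0 0 * x 0)]
  have : nsp (Λ *ᵥ x) ^ 2 < (Λ *ᵥ x) 0 ^ 2 := by linarith
  exact lt_of_pow_lt_pow_left₀ 2 hpos.le this

lemma anticone (Λ : Matrix (Fin 4) (Fin 4) ℝ) (hΛ : Λᵀ * minkowskiEta * Λ = minkowskiEta)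
    (h0 : 1 ≤ Λ 0 0) (x : Fin 4 → ℝ) (hx : x 0 ≤ nsp x) :
    (Λ *ᵥ x) 0 ≤ nsp (Λ *ᵥ x) := by
  by_contra hc
  push_neg at hc
  set M := minkowskiEta * Λᵀ * minkowskiEta with hMdef
  have hML : M * Λ = 1 := (inv_lorentz Λ hΛ).1
  have hLM : Λ * M = 1 := (inv_lorentz Λ hΛ).2
  have hMlor : Mᵀ * minkowskiEta * M = minkowskiEta := by
    have hrl := row_lorentz Λ hΛ
    have hMT : Mᵀ = minkowskiEta * Λ * minkowskiEta := by
      rw [hMdef]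
      rw [Matrix.transpose_mul, Matrix.transpose_mul, eta_transpose, transpose_transpose,
        Matrix.mul_assoc]
    rw [hMT, hMdef]
    have ee : ∀ X : Matrix (Fin 4) (Fin 4) ℝ,
        minkowskiEta * (minkowskiEta * X) = X := fun X => by
      rw [← Matrix.mul_assoc, eta_sq, Matrix.one_mul]
    simp only [Matrix.mul_assoc]
    simp only [ee]
    simp only [← Matrix.mul_assoc]
    rw [Matrix.mul_assoc minkowskiEta Λ minkowskiEta,
      Matrix.mul_assoc minkowskiEta (Λ * minkowskiEta) Λᵀ, hrl, eta_sq, Matrix.one_mul]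
  have hM0 : 1 ≤ M 0 0 := by
    have : M 0 0 = Λ 0 0 := by
      simp [hMdef, minkowskiEta, Matrix.mul_apply, Matrix.diagonal_apply, Fin.sum_univ_four,
        Matrix.transpose_apply]
    rw [this]; exact h0
  have hback : M *ᵥ (Λ *ᵥ x) = x := by
    rw [mulVec_mulVec, hML, one_mulVec]
  have := cone M hMlor hM0 (Λ *ᵥ x) hc
  rw [hback] at this
  exact absurd hx (not_le.mpr this)

/-- If a set `S` of complex four-vectors `K = (ω, k) ∈ ℂ × ℂ³` satisfies the
improved causality criterion `Im ω ≤ |Im k| + b` for some constant `b ∈ ℝ`, then for every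
orthochronous Lorentz transformation `Λ` (a real matrix with `Λᵀ η Λ = η` and `Λ₀₀ ≥ 1`) there
is a constant `b'' ∈ ℝ` such that every transformed vector `K' = ΛK`, `K ∈ S`, satisfies
`Im ω' ≤ |Im k'| + b''`: the improved causality criterion holds in all inertial frames whenever
it holds in one. -/
theorem causality_criterion_in_all_frames (S : Set (Fin 4 → ℂ))
    (h : ∃ b : ℝ, ∀ K ∈ S,
      (K 0).im ≤ Real.sqrt (∑ i : Fin 3, (K i.succ).im ^ 2) + b) :
    ∀ Λ : Matrix (Fin 4) (Fin 4) ℝ,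
      Λᵀ * minkowskiEta * Λ = minkowskiEta → 1 ≤ Λ 0 0 →
      ∃ b'' : ℝ, ∀ K ∈ S,
        ((Λ.map (Complex.ofReal) *ᵥ K) 0).im
          ≤ Real.sqrt (∑ i : Fin 3, ((Λ.map (Complex.ofReal) *ᵥ K) i.succ).im ^ 2) + b'' := by
  obtain ⟨b, hb⟩ := h
  intro Λ hΛ h0
  set B : ℝ := max b 0 with hBdef
  have hB0 : 0 ≤ B := le_max_right _ _
  set c : Fin 4 → ℝ := fun j => Λ j 0 with hcdef
  refine ⟨B * (Λ 0 0 + nsp c), ?_⟩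
  intro K hK
  set y : Fin 4 → ℝ := fun i => (K i).im with hydef
  have him : ∀ j, ((Λ.map (Complex.ofReal) *ᵥ K) j).im = (Λ *ᵥ y) j := by
    intro j
    simp [Matrix.mulVec, dotProduct, Complex.im_sum, hydef]
  have hgoal : Real.sqrt (∑ i : Fin 3, ((Λ.map (Complex.ofReal) *ᵥ K) i.succ).im ^ 2)
      = nsp (Λ *ᵥ y) := by
    rw [nsp]
    congr 1
    exact Finset.sum_congr rfl fun i _ => by rw [him]
  rw [him 0, hgoal]
  -- now a purely real statement
  have hy : y 0 ≤ nsp y + B := by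
    have := hb K hK
    have h2 : y 0 ≤ nsp y + b := this
    have : b ≤ B := le_max_left _ _
    linarith
  set e0 : Fin 4 → ℝ := fun j => if j = 0 then 1 else 0 with he0def
  set y' : Fin 4 → ℝ := y - B • e0 with hy'def
  have hy'succ : ∀ i : Fin 3, y' i.succ = y i.succ := by
    intro i
    simp [hy'def, he0def, Fin.succ_ne_zero]
  have hnspy' : nsp y' = nsp y := by
    rw [nsp, nsp]
    congr 1
    exact Finset.sum_congr rfl fun i _ => by rw [hy'succ]
  have hy'0 : y' 0 ≤ nsp y' := by
    have : y' 0 = y 0 - B := by simp [hy'def, he0def]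
    rw [this, hnspy']
    linarith
  have hcone := anticone Λ hΛ h0 y' hy'0
  have hΛe0 : Λ *ᵥ e0 = c := by
    funext j
    simp [Matrix.mulVec, dotProduct, he0def, hcdef]
  have hdecomp : Λ *ᵥ y = Λ *ᵥ y' + B • c := by
    rw [hy'def, Matrix.mulVec_sub, Matrix.mulVec_smul, hΛe0]
    abel
  have hdecomp' : Λ *ᵥ y' = Λ *ᵥ y - B • c := by
    rw [hdecomp]; abel
  have h1 : (Λ *ᵥ y) 0 = (Λ *ᵥ y') 0 + B * Λ 0 0 := by
    rw [hdecomp]; simp [hcdef]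
  have h2 : nsp (Λ *ᵥ y') ≤ nsp (Λ *ᵥ y) + B * nsp c := by
    rw [hdecomp']
    have := nsp_sub_le (Λ *ᵥ y) (B • c)
    rwa [nsp_smul, abs_of_nonneg hB0] at this
  rw [h1]
  have : (Λ *ᵥ y') 0 ≤ nsp (Λ *ᵥ y) + B * nsp c := le_trans hcone h2
  nlinarith
end

section
/- Let n ≥ 1 and let a₀, …, a_{n−1} : ℂ³ → ℂ be polynomial functions. Suppose there exist R > 0 and b ∈ ℝ such that every pair (ω, k) ∈ ℂ × ℂ³ with |k| > R and ωⁿ + Σ_{m=0}^{n−1} a_m(k) ωᵐ = 0 satisfies Im ω ≤ |Im k| + b. Then there exists b′ ≥ b such that for every k ∈ ℂ³, every root ω of ωⁿ + Σ_{m=0}^{n−1} a_m(k) ωᵐ = 0 satisfies Im ω ≤ |Im k| + b′. -/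
/-!
Where `|k| > R` the hypothesis already gives the bound. On the compact ball `|k| ≤ R` the
coefficients `a_m(k)` are bounded, say `Σ |a_m(k)| ≤ C`, and Cauchy's bound for the roots of a
monic polynomial gives `Im ω ≤ |ω| ≤ max 1 C` there. So `b' = max b (max 1 C)` works.
-/

lemma norm_le_max_one_sum_norm_of_monic_root {K : Type*} [NormedDivisionRing K] {n : ℕ}
    (c : Fin n → K) {ω : K} (hω : ω ^ n + ∑ m : Fin n, c m * ω ^ (m : ℕ) = 0) :
    ‖ω‖ ≤ max 1 (∑ m, ‖c m‖) := by
  rcases le_or_gt ‖ω‖ 1 with hle | hgt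
  · exact le_max_of_le_left hle
  cases n with
  | zero => simp at hω
  | succ n =>
    have hpow_pos : 0 < ‖ω‖ ^ n := pow_pos (one_pos.trans hgt) n
    have key : ‖ω‖ * ‖ω‖ ^ n ≤ (∑ m, ‖c m‖) * ‖ω‖ ^ n :=
      calc ‖ω‖ * ‖ω‖ ^ n = ‖∑ m : Fin (n + 1), c m * ω ^ (m : ℕ)‖ := by
            rw [← pow_succ', ← norm_pow, eq_neg_of_add_eq_zero_left hω, norm_neg]
        _ ≤ ∑ m : Fin (n + 1), ‖c m‖ * ‖ω‖ ^ (m : ℕ) := by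
            simpa only [norm_mul, norm_pow] using
              norm_sum_le Finset.univ fun m : Fin (n + 1) => c m * ω ^ (m : ℕ)
        _ ≤ ∑ m : Fin (n + 1), ‖c m‖ * ‖ω‖ ^ n := by
            gcongr with m
            · exact hgt.le
            · exact Nat.lt_succ_iff.mp m.isLt
        _ = (∑ m, ‖c m‖) * ‖ω‖ ^ n := Finset.sum_mul .. |>.symm
    exact le_max_of_le_right (le_of_mul_le_mul_right key hpow_pos)

lemma exists_bound_of_sqrt_sum_norm_sq_le {𝕜 ι : Type*} [RCLike 𝕜] [Fintype ι]
    {f : (ι → 𝕜) → ℝ} (hf : Continuous f) (R : ℝ) :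
    ∃ C, ∀ k : ι → 𝕜, Real.sqrt (∑ i, ‖k i‖ ^ 2) ≤ R → f k ≤ C := by
  obtain ⟨C, hC⟩ :=
    (isCompact_closedBall (0 : EuclideanSpace 𝕜 ι) R).exists_bound_of_continuousOn
      (hf.comp (PiLp.continuous_ofLp 2 _)).continuousOn
  refine ⟨C, fun k hk => (le_abs_self _).trans (hC (WithLp.toLp 2 k) ?_)⟩
  rwa [mem_closedBall_zero_iff, EuclideanSpace.norm_eq]

theorem causality_bound_extends_to_all_k_general (n : ℕ)
    (a : Fin n → MvPolynomial (Fin 3) ℂ) (R : ℝ) (b : ℝ)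
    (h : ∀ (ω : ℂ) (k : Fin 3 → ℂ),
      R < Real.sqrt (∑ i, ‖k i‖ ^ 2) →
      ω ^ n + ∑ m : Fin n, MvPolynomial.eval k (a m) * ω ^ (m : ℕ) = 0 →
      ω.im ≤ Real.sqrt (∑ i, (k i).im ^ 2) + b) :
    ∃ b' : ℝ, b ≤ b' ∧ ∀ (ω : ℂ) (k : Fin 3 → ℂ),
      ω ^ n + ∑ m : Fin n, MvPolynomial.eval k (a m) * ω ^ (m : ℕ) = 0 →
      ω.im ≤ Real.sqrt (∑ i, (k i).im ^ 2) + b' := by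
  have hcoeff : Continuous fun k : Fin 3 → ℂ => ∑ m, ‖MvPolynomial.eval k (a m)‖ :=
    continuous_finsetSum _ fun m _ => (MvPolynomial.continuous_eval (a m)).norm
  obtain ⟨C, hC⟩ := exists_bound_of_sqrt_sum_norm_sq_le hcoeff R
  refine ⟨max b (max 1 C), le_max_left _ _, fun ω k hroot => ?_⟩
  rcases lt_or_ge R (Real.sqrt (∑ i, ‖k i‖ ^ 2)) with hfar | hnear
  · exact (h ω k hfar hroot).trans (by gcongr; exact le_max_left _ _)
  · calc ω.im ≤ ‖ω‖ := Complex.im_le_norm ω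
      _ ≤ max 1 (∑ m, ‖MvPolynomial.eval k (a m)‖) :=
          norm_le_max_one_sum_norm_of_monic_root _ hroot
      _ ≤ max b (max 1 C) := le_max_of_le_right (max_le_max_left 1 (hC k hnear))
      _ ≤ Real.sqrt (∑ i, (k i).im ^ 2) + max b (max 1 C) :=
          le_add_of_nonneg_left (Real.sqrt_nonneg _)

/-- Let `n ≥ 1` and let `a₀, …, a_{n−1} : ℂ³ → ℂ` be polynomial functions.
If there exist `R > 0` and `b ∈ ℝ` such that every root `ω` of
`ωⁿ + Σ_{m<n} a_m(k) ωᵐ = 0` with `|k| > R` satisfies `Im ω ≤ |Im k| + b`, then there exists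
`b' ≥ b` such that for every `k ∈ ℂ³` every root `ω` satisfies `Im ω ≤ |Im k| + b'`. -/
theorem causality_bound_extends_to_all_k (n : ℕ) (hn : 1 ≤ n)
    (a : Fin n → MvPolynomial (Fin 3) ℂ) (R : ℝ) (hR : 0 < R) (b : ℝ)
    (h : ∀ (ω : ℂ) (k : Fin 3 → ℂ),
      R < Real.sqrt (∑ i, ‖k i‖ ^ 2) →
      ω ^ n + ∑ m : Fin n, MvPolynomial.eval k (a m) * ω ^ (m : ℕ) = 0 →
      ω.im ≤ Real.sqrt (∑ i, (k i).im ^ 2) + b) :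
    ∃ b' : ℝ, b ≤ b' ∧ ∀ (ω : ℂ) (k : Fin 3 → ℂ),
      ω ^ n + ∑ m : Fin n, MvPolynomial.eval k (a m) * ω ^ (m : ℕ) = 0 →
      ω.im ≤ Real.sqrt (∑ i, (k i).im ^ 2) + b' :=
  causality_bound_extends_to_all_k_general n a R b h
end

section
/- Fix integers n ≥ 1 and N ≥ 0 and a constant c > 0. There exists a₁ > 0 (depending only on n, N, c) such that for every κ ≥ 0, every complex n×n matrix M all of whose entries satisfy |M_{ij}| ≤ c(1 + κᴺ), every ε ∈ (0,1), and every t ≥ 0: ‖exp(−M t)‖ ≤ (a₁ / ε^{n−1}) (1 + κ^{N(n−1)}) exp((λ + ε) t), where λ = max{−Re μ : μ an eigenvalue of M} and ‖·‖ denotes the spectral (ℓ²-operator) norm. -/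
/-!
Putzer's formula: if `∏_{j<m} (A - ν_j) = 0` (for a matrix, by Cayley–Hamilton with `ν_j` its
eigenvalues), then `exp (t A) = ∑_{k<m} r_k(t) P_k` with `P_k = ∏_{j<k} (A - ν_j)`, where the
scalar functions `r_k` solve the triangular system `r_0' = ν_0 r_0`, `r_k' = ν_k r_k + r_{k-1}`,
`r_0(0) = 1`, `r_k(0) = 0`; both sides solve `Φ' = A Φ`, `Φ(0) = 1`.
If `Re ν_j ≤ λ` then `|r_k(t)| ≤ t^k/k! e^{λt}`, and `‖P_k‖ ≤ (1 + 2‖A‖)^k` since `|ν_j| ≤ ‖A‖`.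
Writing `t^k/k! = ε^{-k} (εt)^k/k!` and summing the exponential series trades the polynomial
growth in `t` for the factor `ε^{1-m} e^{εt}`. For `A = -M`, equivalence of norms on matrices
gives `‖M‖ ≤ C c (1 + κ^N)`, and `(1 + κ^N)^{n-1} ≤ 2^{n-2} (1 + κ^{N(n-1)})`.
-/

open scoped BigOperators

/-- The spectral norm (ℓ²-operator norm) of a complex `n × n` matrix: the operator norm of
the induced linear map on the Euclidean space `ℂⁿ`. -/
noncomputable def spectralNorm' {n : ℕ} (A : Matrix (Fin n) (Fin n) ℂ) : ℝ :=
  ‖LinearMap.toContinuousLinearMap (Matrix.toEuclideanLin A)‖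

open Polynomial NormedSpace Finset

noncomputable def putzerCoeff (ν : ℕ → ℂ) : ℕ → ℝ → ℂ
  | 0 => fun t => Complex.exp (ν 0 * t)
  | k + 1 => fun t => Complex.exp (ν (k + 1) * t) *
      ∫ s in (0 : ℝ)..t, Complex.exp (-ν (k + 1) * s) * putzerCoeff ν k s

lemma hasDerivAt_cexp_mul_ofReal (z : ℂ) (t : ℝ) :
    HasDerivAt (fun t : ℝ => Complex.exp (z * t)) (z * Complex.exp (z * t)) t := by
  simpa [mul_comm] using (((hasDerivAt_id t).ofReal_comp).const_mul z).cexp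

section PutzerCoeff

variable (ν : ℕ → ℂ)

@[simp] lemma putzerCoeff_zero_zero : putzerCoeff ν 0 0 = 1 := by simp [putzerCoeff]

@[simp] lemma putzerCoeff_succ_zero (k : ℕ) : putzerCoeff ν (k + 1) 0 = 0 := by
  simp [putzerCoeff]

lemma continuous_putzerCoeff : ∀ k, Continuous (putzerCoeff ν k)
  | 0 => by unfold putzerCoeff; fun_prop
  | k + 1 => by
    have hk := continuous_putzerCoeff k
    have hint : Continuous fun s : ℝ => Complex.exp (-ν (k + 1) * s) * putzerCoeff ν k s := by
      fun_prop
    unfold putzerCoeff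
    exact (by fun_prop : Continuous fun t : ℝ => Complex.exp (ν (k + 1) * t)).mul
      (intervalIntegral.continuous_primitive (fun a b => hint.intervalIntegrable a b) 0)

lemma hasDerivAt_putzerCoeff_zero (t : ℝ) :
    HasDerivAt (putzerCoeff ν 0) (ν 0 * putzerCoeff ν 0 t) t :=
  hasDerivAt_cexp_mul_ofReal (ν 0) t

lemma hasDerivAt_putzerCoeff_succ (k : ℕ) (t : ℝ) :
    HasDerivAt (putzerCoeff ν (k + 1))
      (ν (k + 1) * putzerCoeff ν (k + 1) t + putzerCoeff ν k t) t := by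
  have hint : Continuous fun s : ℝ => Complex.exp (-ν (k + 1) * s) * putzerCoeff ν k s :=
    (by fun_prop : Continuous fun s : ℝ => Complex.exp (-ν (k + 1) * s)).mul
      (continuous_putzerCoeff ν k)
  have hprim := intervalIntegral.integral_hasDerivAt_right (hint.intervalIntegrable 0 t)
    (hint.stronglyMeasurableAtFilter _ _) hint.continuousAt
  refine ((hasDerivAt_cexp_mul_ofReal (ν (k + 1)) t).mul hprim).congr_deriv ?_
  rw [← mul_assoc (Complex.exp _), ← Complex.exp_add, putzerCoeff]
  simp [mul_assoc]

lemma norm_putzerCoeff_le {lam : ℝ} :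
    ∀ k, (∀ j ≤ k, (ν j).re ≤ lam) → ∀ t, 0 ≤ t →
      ‖putzerCoeff ν k t‖ ≤ t ^ k / k.factorial * Real.exp (lam * t)
  | 0, hν, t, ht => by
    simpa [putzerCoeff, Complex.norm_exp] using mul_le_mul_of_nonneg_right (hν 0 le_rfl) ht
  | k + 1, hν, t, ht => by
    have ih := norm_putzerCoeff_le k (fun j hj => hν j (hj.trans k.le_succ))
    have hpt : ∀ s ∈ Set.Ioc 0 t, ‖Complex.exp (ν (k + 1) * t) *
        (Complex.exp (-ν (k + 1) * s) * putzerCoeff ν k s)‖ ≤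
          Real.exp (lam * t) * (s ^ k / k.factorial) := by
      rintro s ⟨hs, hst⟩
      rw [← mul_assoc, ← Complex.exp_add, norm_mul, Complex.norm_exp]
      calc Real.exp (ν (k + 1) * t + -ν (k + 1) * s).re * ‖putzerCoeff ν k s‖
          ≤ Real.exp (lam * (t - s)) * (s ^ k / k.factorial * Real.exp (lam * s)) := by
            gcongr
            · simpa [mul_sub] using
                mul_le_mul_of_nonneg_right (hν (k + 1) le_rfl) (sub_nonneg.2 hst)
            · exact ih s hs.le
        _ = Real.exp (lam * t) * (s ^ k / k.factorial) := by
            rw [mul_left_comm, ← Real.exp_add]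
            ring_nf
    calc ‖putzerCoeff ν (k + 1) t‖
        ≤ ∫ s in (0 : ℝ)..t, Real.exp (lam * t) * (s ^ k / k.factorial) := by
          simp only [putzerCoeff]
          rw [← intervalIntegral.integral_const_mul]
          exact intervalIntegral.norm_integral_le_of_norm_le ht
            (Filter.Eventually.of_forall hpt) (Continuous.intervalIntegrable (by fun_prop) _ _)
      _ = t ^ (k + 1) / (k + 1).factorial * Real.exp (lam * t) := by
          simp [integral_pow, Nat.factorial_succ]
          field_simp

end PutzerCoeff

lemma sum_range_pow_div_factorial_le {B ε t : ℝ} (hε : 0 < ε) (hεB : ε ≤ B) (ht : 0 ≤ t)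
    (m : ℕ) :
    ∑ k ∈ range m, (B * t) ^ k / k.factorial ≤ (B / ε) ^ (m - 1) * Real.exp (ε * t) := by
  have hBε : 1 ≤ B / ε := (one_le_div hε).2 hεB
  calc ∑ k ∈ range m, (B * t) ^ k / k.factorial
      = ∑ k ∈ range m, (B / ε) ^ k * ((ε * t) ^ k / k.factorial) := by
        refine sum_congr rfl fun k _ => ?_
        rw [← mul_div_assoc, ← mul_pow]
        field_simp
    _ ≤ ∑ k ∈ range m, (B / ε) ^ (m - 1) * ((ε * t) ^ k / k.factorial) := by
        gcongr with k hk
        exact Nat.le_sub_one_of_lt (mem_range.1 hk)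
    _ ≤ (B / ε) ^ (m - 1) * Real.exp (ε * t) := by
        rw [← mul_sum]
        gcongr
        exact Real.sum_le_exp_of_nonneg (by positivity) m

theorem eq_exp_smul_of_hasDerivAt {𝔸 : Type*} [NormedRing 𝔸] [NormedAlgebra ℝ 𝔸]
    [CompleteSpace 𝔸] {A : 𝔸} {Φ : ℝ → 𝔸} (hΦ : ∀ t, HasDerivAt Φ (A * Φ t) t) (hΦ0 : Φ 0 = 1)
    (t : ℝ) : Φ t = exp (t • A) := by
  let +nondep : NormedAlgebra ℚ 𝔸 := .restrictScalars ℚ ℝ 𝔸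
  have hderiv : ∀ u, HasDerivAt (fun u : ℝ => exp ((-u) • A) * Φ u) 0 u := by
    intro u
    have hexp : HasDerivAt (fun u : ℝ => exp ((-u) • A)) ((-1 : ℝ) • (exp ((-u) • A) * A)) u :=
      (hasDerivAt_exp_smul_const A (-u)).scomp u (hasDerivAt_neg u)
    refine (hexp.mul (hΦ u)).congr_deriv ?_
    simp [mul_assoc]
  have hinv : exp ((-t) • A) * Φ t = 1 := by
    rw [is_const_of_deriv_eq_zero (fun u => (hderiv u).differentiableAt)
      (fun u => (hderiv u).deriv) t 0]
    simp [hΦ0]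
  calc Φ t = exp (t • A) * (exp ((-t) • A) * Φ t) := by
        rw [← mul_assoc, ← exp_add_of_commute ((Commute.refl A).smul_left _ |>.smul_right _),
          ← add_smul, add_neg_cancel, zero_smul, exp_zero, one_mul]
    _ = exp (t • A) := by rw [hinv, mul_one]

noncomputable def putzerPoly (ν : ℕ → ℂ) (k : ℕ) : ℂ[X] := ∏ j ∈ range k, (X - C (ν j))

lemma X_mul_putzerPoly (ν : ℕ → ℂ) (k : ℕ) :
    X * putzerPoly ν k = putzerPoly ν (k + 1) + C (ν k) * putzerPoly ν k := by
  rw [putzerPoly, putzerPoly, prod_range_succ]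
  ring

lemma isRoot_putzerPoly {ν : ℕ → ℂ} {j m : ℕ} (h : j < m) : (putzerPoly ν m).IsRoot (ν j) := by
  simp only [putzerPoly, IsRoot, eval_prod]
  exact prod_eq_zero (mem_range.2 h) (by simp)

lemma Multiset.exists_prod_map_X_sub_C_eq_putzerPoly (s : Multiset ℂ) :
    ∃ ν, (s.map (X - C ·)).prod = putzerPoly ν (Multiset.card s) := by
  induction s using Multiset.induction_on with
  | empty => exact ⟨0, by simp [putzerPoly]⟩
  | cons a s ih =>
    obtain ⟨ν, hν⟩ := ih
    exact ⟨fun j => j.casesOn a ν, by simp [putzerPoly, prod_range_succ', hν, mul_comm]⟩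

lemma mul_aeval_putzerPoly {𝔸 : Type*} [Ring 𝔸] [Algebra ℂ 𝔸] (A : 𝔸) (ν : ℕ → ℂ) (k : ℕ) :
    A * aeval A (putzerPoly ν k) =
      aeval A (putzerPoly ν (k + 1)) + ν k • aeval A (putzerPoly ν k) := by
  simpa [Algebra.smul_def] using congrArg (aeval A) (X_mul_putzerPoly ν k)

section Putzer

variable {𝔸 : Type*} [NormedRing 𝔸] [NormedAlgebra ℂ 𝔸] {A : 𝔸} {ν : ℕ → ℂ}

lemma norm_aeval_putzerPoly_le [NormOneClass 𝔸] {B : ℝ} :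
    ∀ k, (∀ j < k, ‖A - algebraMap ℂ 𝔸 (ν j)‖ ≤ B) → ‖aeval A (putzerPoly ν k)‖ ≤ B ^ k
  | 0, _ => by simp [putzerPoly]
  | k + 1, hB => by
    rw [putzerPoly, prod_range_succ, map_mul, ← putzerPoly, pow_succ]
    have ih := norm_aeval_putzerPoly_le k fun j hj => hB j (hj.trans k.lt_succ_self)
    have hk := hB k k.lt_succ_self
    simpa using (norm_mul_le _ _).trans (mul_le_mul ih hk (norm_nonneg _)
      (pow_nonneg ((norm_nonneg _).trans hk) k))

variable [CompleteSpace 𝔸]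

theorem exp_smul_eq_sum_putzer {m : ℕ} (hA : aeval A (putzerPoly ν m) = 0) (t : ℝ) :
    exp (t • A) = ∑ k ∈ range m, putzerCoeff ν k t • aeval A (putzerPoly ν k) := by
  set P : ℕ → 𝔸 := fun k => aeval A (putzerPoly ν k) with hP
  obtain _ | m := m
  · have : Subsingleton 𝔸 := subsingleton_of_zero_eq_one (by simpa [putzerPoly] using hA.symm)
    exact Subsingleton.elim _ _
  have hmul : ∀ t, A * ∑ k ∈ range (m + 1), putzerCoeff ν k t • P k =
      ∑ k ∈ range (m + 1), (ν k * putzerCoeff ν k t) • P k +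
        ∑ k ∈ range m, putzerCoeff ν k t • P (k + 1) := by
    intro t
    simp only [mul_sum, mul_smul_comm, hP, mul_aeval_putzerPoly, smul_add, smul_smul,
      sum_add_distrib]
    rw [sum_range_succ _ m, hA, smul_zero, add_zero, add_comm]
    simp only [mul_comm]
  have hderiv : ∀ t, HasDerivAt (fun t => ∑ k ∈ range (m + 1), putzerCoeff ν k t • P k)
      (A * ∑ k ∈ range (m + 1), putzerCoeff ν k t • P k) t := by
    intro t
    rw [hmul]
    simp_rw [sum_range_succ' _ m]
    refine (HasDerivAt.add (HasDerivAt.fun_sum fun k _ =>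
        (hasDerivAt_putzerCoeff_succ ν k t).smul_const (P (k + 1)))
      ((hasDerivAt_putzerCoeff_zero ν t).smul_const (P 0))).congr_deriv ?_
    simp only [add_smul, sum_add_distrib]
    abel
  exact (eq_exp_smul_of_hasDerivAt hderiv (by simp [sum_range_succ', hP, putzerPoly]) t).symm

theorem norm_exp_smul_le_of_aeval_putzerPoly_eq_zero [NormOneClass 𝔸] {m : ℕ}
    (hA : aeval A (putzerPoly ν m) = 0) {lam B ε t : ℝ} (hre : ∀ j < m, (ν j).re ≤ lam)
    (hB : ∀ j < m, ‖A - algebraMap ℂ 𝔸 (ν j)‖ ≤ B) (hε : 0 < ε) (hεB : ε ≤ B) (ht : 0 ≤ t) :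
    ‖exp (t • A)‖ ≤ (B / ε) ^ (m - 1) * Real.exp ((lam + ε) * t) := by
  rw [exp_smul_eq_sum_putzer hA]
  calc ‖∑ k ∈ range m, putzerCoeff ν k t • aeval A (putzerPoly ν k)‖
      ≤ ∑ k ∈ range m, t ^ k / k.factorial * Real.exp (lam * t) * B ^ k := by
        refine norm_sum_le_of_le _ fun k hk => (norm_smul_le _ _).trans ?_
        have hk := mem_range.1 hk
        gcongr
        · exact norm_putzerCoeff_le ν k (fun j hj => hre j (by omega)) t ht
        · exact norm_aeval_putzerPoly_le k fun j hj => hB j (by omega)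
    _ = Real.exp (lam * t) * ∑ k ∈ range m, (B * t) ^ k / k.factorial := by
        rw [mul_sum]
        refine sum_congr rfl fun k _ => ?_
        ring
    _ ≤ Real.exp (lam * t) * ((B / ε) ^ (m - 1) * Real.exp (ε * t)) := by
        gcongr
        exact sum_range_pow_div_factorial_le hε hεB ht m
    _ = (B / ε) ^ (m - 1) * Real.exp ((lam + ε) * t) := by
        rw [add_mul, Real.exp_add]
        ring

end Putzer

namespace Matrix

variable {ι : Type*} [Fintype ι] [DecidableEq ι]

lemma exists_charpoly_eq_putzerPoly (A : Matrix ι ι ℂ) :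
    ∃ ν, A.charpoly = putzerPoly ν (Fintype.card ι) := by
  have hsplit := IsAlgClosed.splits A.charpoly
  rw [hsplit.eq_prod_roots_of_monic A.charpoly_monic, ← A.charpoly_natDegree_eq_dim,
    ← splits_iff_card_roots.1 hsplit]
  exact A.charpoly.roots.exists_prod_map_X_sub_C_eq_putzerPoly

lemma re_le_sSup_of_isRoot_charpoly_neg {M : Matrix ι ι ℂ} {z : ℂ}
    (hz : (-M).charpoly.IsRoot z) :
    z.re ≤ sSup {r : ℝ | ∃ μ : ℂ, M.charpoly.IsRoot μ ∧ r = -μ.re} := by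
  have hfin : {r : ℝ | ∃ μ : ℂ, M.charpoly.IsRoot μ ∧ r = -μ.re}.Finite :=
    ((finite_setOfPred_isRoot M.charpoly_monic.ne_zero).image fun μ : ℂ => -μ.re).subset
      (by rintro _ ⟨μ, hμ, rfl⟩; exact ⟨μ, hμ, rfl⟩)
  refine le_csSup hfin.bddAbove ⟨-z, ?_, by simp⟩
  rw [← mem_spectrum_iff_isRoot_charpoly, ← spectrum.neg_eq] at hz
  rwa [← mem_spectrum_iff_isRoot_charpoly, ← Set.mem_neg]

open scoped Matrix.Norms.L2Operator

lemma exists_l2_opNorm_le_of_forall_norm_le (𝕜 m n : Type*) [RCLike 𝕜] [Fintype m] [Fintype n]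
    [DecidableEq n] :
    ∃ C, 0 ≤ C ∧ ∀ (A : Matrix m n 𝕜) (b : ℝ), 0 ≤ b → (∀ i j, ‖A i j‖ ≤ b) → ‖A‖ ≤ C * b := by
  let f := LinearMap.toContinuousLinearMap
    (ofLinearEquiv 𝕜 : (m → n → 𝕜) ≃ₗ[𝕜] Matrix m n 𝕜).toLinearMap
  refine ⟨‖f‖, norm_nonneg _, fun A b hb hA => ?_⟩
  calc ‖A‖ = ‖f (of.symm A)‖ := rfl
    _ ≤ ‖f‖ * b := f.le_opNorm_of_le <| (pi_norm_le_iff_of_nonneg hb).2 fun i =>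
        (pi_norm_le_iff_of_nonneg hb).2 fun j => hA i j

theorem norm_exp_smul_neg_le [Nonempty ι] (M : Matrix ι ι ℂ) {K ε t : ℝ} (hK : ‖M‖ ≤ K)
    (hε : 0 < ε) (hε1 : ε ≤ 1) (ht : 0 ≤ t) :
    ‖exp (t • -M)‖ ≤ ((1 + 2 * K) / ε) ^ (Fintype.card ι - 1) *
      Real.exp ((sSup {r : ℝ | ∃ μ : ℂ, M.charpoly.IsRoot μ ∧ r = -μ.re} + ε) * t) := by
  obtain ⟨ν, hν⟩ := (-M).exists_charpoly_eq_putzerPoly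
  have hroot : ∀ j < Fintype.card ι, (-M).charpoly.IsRoot (ν j) :=
    fun j hj => hν ▸ isRoot_putzerPoly hj
  have hB : ∀ j < Fintype.card ι, ‖-M - algebraMap ℂ _ (ν j)‖ ≤ 1 + 2 * K := by
    intro j hj
    have hνM : ‖ν j‖ ≤ ‖-M‖ :=
      spectrum.norm_le_norm_of_mem (mem_spectrum_iff_isRoot_charpoly.2 (hroot j hj))
    calc ‖-M - algebraMap ℂ _ (ν j)‖ ≤ ‖-M‖ + ‖ν j‖ := by
          simpa using norm_sub_le (-M) (algebraMap ℂ _ (ν j))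
      _ ≤ 1 + 2 * K := by rw [norm_neg] at hνM ⊢; linarith
  exact norm_exp_smul_le_of_aeval_putzerPoly_eq_zero (by rw [← hν, aeval_self_charpoly])
    (fun j hj => re_le_sSup_of_isRoot_charpoly_neg (hroot j hj)) hB hε
    (by linarith [(norm_nonneg M).trans hK]) ht

end Matrix

open scoped Matrix.Norms.L2Operator in
lemma spectralNorm'_eq_l2_opNorm {n : ℕ} (A : Matrix (Fin n) (Fin n) ℂ) :
    spectralNorm' A = ‖A‖ :=
  rfl

lemma one_add_mul_one_add_pow_le {a x : ℝ} (ha : 0 ≤ a) (hx : 0 ≤ x) (m : ℕ) :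
    (1 + a * (1 + x)) ^ m ≤ (1 + a) ^ m * 2 ^ (m - 1) * (1 + x ^ m) := by
  calc (1 + a * (1 + x)) ^ m ≤ ((1 + a) * (1 + x)) ^ m := by gcongr; nlinarith
    _ ≤ (1 + a) ^ m * (2 ^ (m - 1) * (1 + x ^ m)) := by
        rw [mul_pow]
        gcongr
        simpa using add_pow_le zero_le_one hx m
    _ = (1 + a) ^ m * 2 ^ (m - 1) * (1 + x ^ m) := by ring

/-- Fix `n ≥ 1`, `N ≥ 0` and `c > 0`.  There exists `a₁ > 0` (depending
only on `n`, `N`, `c`) such that for every `κ ≥ 0`, every complex `n × n` matrix `M` with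
`|M_{ij}| ≤ c(1 + κᴺ)`, every `ε ∈ (0,1)` and every `t ≥ 0`,
`‖exp(−Mt)‖ ≤ (a₁/ε^{n−1})(1 + κ^{N(n−1)}) exp((λ + ε)t)`, where
`λ = max{−Re μ : μ eigenvalue of M}` and `‖·‖` is the spectral norm. -/
theorem matrix_exponential_spectral_norm_bound (n N : ℕ) (hn : 1 ≤ n) (c : ℝ) (hc : 0 < c) :
    ∃ a₁ : ℝ, 0 < a₁ ∧
      ∀ (κ : ℝ), 0 ≤ κ →
      ∀ M : Matrix (Fin n) (Fin n) ℂ,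
        (∀ i j, ‖M i j‖ ≤ c * (1 + κ ^ N)) →
      ∀ ε : ℝ, ε ∈ Set.Ioo (0 : ℝ) 1 →
      ∀ t : ℝ, 0 ≤ t →
        spectralNorm' (NormedSpace.exp ((-(t : ℂ)) • M)) ≤
          (a₁ / ε ^ (n - 1)) * (1 + κ ^ (N * (n - 1))) *
            Real.exp ((sSup {r : ℝ | ∃ μ : ℂ, M.charpoly.IsRoot μ ∧ r = -μ.re} + ε) * t) := by
  obtain ⟨C, hC0, hC⟩ := Matrix.exists_l2_opNorm_le_of_forall_norm_le ℂ (Fin n) (Fin n)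
  refine ⟨(1 + 2 * C * c) ^ (n - 1) * 2 ^ (n - 1 - 1), by positivity, ?_⟩
  intro κ hκ M hM ε ⟨hε0, hε1⟩ t ht
  have : Nonempty (Fin n) := ⟨⟨0, hn⟩⟩
  have hbound := M.norm_exp_smul_neg_le (hC M _ (by positivity) hM) hε0 hε1.le ht
  rw [Fintype.card_fin] at hbound
  rw [spectralNorm'_eq_l2_opNorm, show (-(t : ℂ)) • M = t • -M by
    rw [neg_smul, ← smul_neg, Complex.coe_smul]]
  refine hbound.trans ?_
  rw [div_pow, pow_mul, div_mul_eq_mul_div _ _ (1 + _)]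
  gcongr ?_ / _ * _
  calc (1 + 2 * (C * (c * (1 + κ ^ N)))) ^ (n - 1)
      = (1 + 2 * C * c * (1 + κ ^ N)) ^ (n - 1) := by ring
    _ ≤ _ := one_add_mul_one_add_pow_le (by positivity) (pow_nonneg hκ N) (n - 1)
end

section
/- Let α ∈ (−1, 0) ∪ (0, 1) and θ ∈ [−π, 0]. Then for the integer l = sgn(α)·(⌊−θ/(π|α|)⌋ + 1) one has 0 < α l π + θ < π, and in particular sin(α l π + θ) > 0. Consequently, if α, θ ∈ ℝ satisfy sin(α l π + θ) ≤ 0 for every integer l, then α is an integer. -/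
open Real


lemma aux1 (a θ : ℝ) (ha0 : 0 < a) (ha1 : a < 1) :
    0 < a * ((⌊-θ/(π*a)⌋ : ℤ) + 1 : ℤ) * π + θ ∧ a * ((⌊-θ/(π*a)⌋ : ℤ) + 1 : ℤ) * π + θ < π := by
  have hpa : 0 < π * a := mul_pos pi_pos ha0
  have h1 : (⌊-θ/(π*a)⌋ : ℝ) * (π*a) ≤ -θ := by
    rw [← le_div_iff₀ hpa]; exact Int.floor_le _
  have h2 : -θ < ((⌊-θ/(π*a)⌋ : ℝ) + 1) * (π*a) := by
    rw [← div_lt_iff₀ hpa]; exact Int.lt_floor_add_one _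
  constructor <;> push_cast <;> nlinarith [pi_pos]

lemma aux2 (a θ : ℝ) (ha : a ∈ Set.Ioo (-1:ℝ) 0 ∪ Set.Ioo (0:ℝ) 1) :
    ∃ l : ℤ, 0 < a * l * π + θ ∧ a * l * π + θ < π := by
  rcases ha with ⟨h1, h2⟩ | ⟨h1, h2⟩
  · obtain ⟨c1, c2⟩ := aux1 (-a) θ (by linarith) (by linarith)
    refine ⟨-(⌊-θ/(π*(-a))⌋ + 1), ?_, ?_⟩ <;> push_cast at c1 c2 ⊢ <;> nlinarith
  · obtain ⟨c1, c2⟩ := aux1 a θ h1 h2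
    exact ⟨⌊-θ/(π*a)⌋ + 1, c1, c2⟩

lemma aux3 (α' θ' : ℝ) (h : ∀ l : ℤ, Real.sin (α' * l * π + θ') ≤ 0) : ∃ m : ℤ, α' = m := by
  by_contra hc
  push_neg at hc
  set m := ⌊α'⌋ with hm
  have hb0 : 0 < α' - m := by
    rcases (Int.floor_le α').lt_or_eq with hlt | heq
    · linarith
    · exact absurd heq.symm (hc m)
  have hb1 : α' - m < 1 := by
    have := Int.lt_floor_add_one α'; linarith
  set γ := 2 * (α' - m) with hγ
  have h2 : ∀ k : ℤ, Real.sin (γ * k * π + θ') ≤ 0 := by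
    intro k
    have := h (2 * k)
    have e : α' * ((2*k : ℤ) : ℝ) * π + θ' = γ * k * π + θ' + (m*k : ℤ) * (2 * π) := by
      push_cast [hγ]; ring
    rwa [e, Real.sin_add_int_mul_two_pi] at this
  -- reduce θ' mod 2π
  set j := ⌊(θ' + π)/(2*π)⌋ with hj
  set θ'' := θ' - j * (2*π) with hθ''
  have h2π : (0:ℝ) < 2*π := by positivity
  have hj1 : (j:ℝ) * (2*π) ≤ θ' + π := by
    rw [← le_div_iff₀ h2π]; exact Int.floor_le _
  have hj2 : θ' + π < ((j:ℝ) + 1) * (2*π) := by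
    rw [← div_lt_iff₀ h2π]; exact Int.lt_floor_add_one _
  have hθ''lo : -π ≤ θ'' := by rw [hθ'']; linarith
  have hθ''hi : θ'' < π := by rw [hθ'']; linarith
  have hsθ : ∀ x : ℝ, Real.sin (x + θ'') = Real.sin (x + θ') := by
    intro x
    have e : x + θ' = x + θ'' + j * (2*π) := by rw [hθ'']; ring
    rw [e, Real.sin_add_int_mul_two_pi]
  have h3 : ∀ k : ℤ, Real.sin (γ * k * π + θ'') ≤ 0 := by
    intro k; rw [hsθ]; exact h2 k
  have hθ''0 : θ'' ≤ 0 := by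
    by_contra hp
    push_neg at hp
    have := Real.sin_pos_of_pos_of_lt_pi hp hθ''hi
    have h0 := h3 0
    simp at h0
    linarith
  have hγ0 : 0 < γ := by simp [hγ]; linarith
  have hγ2 : γ < 2 := by simp [hγ]; linarith
  rcases lt_trichotomy γ 1 with hγ1 | hγ1 | hγ1
  · obtain ⟨l, hl1, hl2⟩ := aux2 γ θ'' (Or.inr ⟨hγ0, hγ1⟩)
    have := Real.sin_pos_of_pos_of_lt_pi hl1 hl2
    linarith [h3 l]
  · -- γ = 1 : α' = m + 1/2
    have hα' : α' = m + 1/2 := by rw [hγ] at hγ1; linarith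
    have hs1 : Real.sin (π + θ') ≤ 0 := by
      have := h2 1; rw [hγ1] at this; simpa using this
    have hs0 : Real.sin θ' ≤ 0 := by
      have := h2 0; simpa using this
    have hsz : Real.sin θ' = 0 := by
      rw [add_comm, Real.sin_add_pi] at hs1; linarith
    obtain ⟨q, hq⟩ := Real.sin_eq_zero_iff.mp hsz
    have hx1 := h 1
    have hxm1 := h (-1)
    have e1 : α' * ((-1 : ℤ) : ℝ) * π + θ' = -(α' * ((1:ℤ):ℝ) * π + θ') + q * (2*π) := by
      push_cast; rw [← hq]; ring
    rw [e1, Real.sin_add_int_mul_two_pi, Real.sin_neg] at hxm1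
    have hxz : Real.sin (α' * ((1:ℤ):ℝ) * π + θ') = 0 := le_antisymm hx1 (by linarith)
    obtain ⟨n, hn⟩ := Real.sin_eq_zero_iff.mp hxz
    have : ((2*(n - m - q) - 1 : ℤ) : ℝ) * π = 0 := by
      push_cast
      have : (n:ℝ) * π = α' * 1 * π + θ' := by exact_mod_cast hn
      rw [hα', ← hq] at this
      nlinarith
    have hz : (2*(n - m - q) - 1 : ℤ) = 0 := by
      rcases mul_eq_zero.mp this with h | h
      · exact_mod_cast h
      · exact absurd h Real.pi_ne_zero
    omega
  · obtain ⟨l, hl1, hl2⟩ := aux2 (γ - 2) θ'' (Or.inl ⟨by linarith, by linarith⟩)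
    have hpos := Real.sin_pos_of_pos_of_lt_pi hl1 hl2
    have e : (γ - 2) * l * π + θ'' = γ * l * π + θ'' + (-l : ℤ) * (2*π) := by push_cast; ring
    rw [e, Real.sin_add_int_mul_two_pi] at hpos
    linarith [h3 l]

/-- Let `α ∈ (−1,0) ∪ (0,1)` and `θ ∈ [−π, 0]`.  Then for the integer
`l = sgn(α)(⌊−θ/(π|α|)⌋ + 1)` one has `0 < αlπ + θ < π`, in particular `sin(αlπ + θ) > 0`.
Consequently, if `α, θ ∈ ℝ` satisfy `sin(αlπ + θ) ≤ 0` for every integer `l`, then `α` is an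
integer. -/
theorem sin_positive_choice_and_integrality (α θ : ℝ)
    (hα : α ∈ Set.Ioo (-1 : ℝ) 0 ∪ Set.Ioo (0 : ℝ) 1)
    (hθ : θ ∈ Set.Icc (-π) 0) :
    (0 < α * ((if 0 < α then (1 : ℤ) else -1) * (⌊-θ / (π * |α|)⌋ + 1) : ℤ) * π + θ ∧
      α * ((if 0 < α then (1 : ℤ) else -1) * (⌊-θ / (π * |α|)⌋ + 1) : ℤ) * π + θ < π ∧
      0 < Real.sin
        (α * ((if 0 < α then (1 : ℤ) else -1) * (⌊-θ / (π * |α|)⌋ + 1) : ℤ) * π + θ)) ∧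
    (∀ α' θ' : ℝ, (∀ l : ℤ, Real.sin (α' * l * π + θ') ≤ 0) → ∃ m : ℤ, α' = m) := by
  refine ⟨?_, aux3⟩
  rcases hα with ⟨h1, h2⟩ | ⟨h1, h2⟩
  · have habs : |α| = -α := abs_of_neg h2
    rw [habs, if_neg (by linarith : ¬ 0 < α)]
    obtain ⟨c1, c2⟩ := aux1 (-α) θ (by linarith) (by linarith)
    have e : α * ((-1) * (⌊-θ / (π * -α)⌋ + 1) : ℤ) * π = (-α) * ((⌊-θ/(π * -α)⌋ : ℤ) + 1 : ℤ) * π := by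
      push_cast; ring
    rw [e]
    exact ⟨c1, c2, Real.sin_pos_of_pos_of_lt_pi c1 c2⟩
  · have habs : |α| = α := abs_of_pos h1
    rw [habs, if_pos h1]
    obtain ⟨c1, c2⟩ := aux1 α θ h1 h2
    have e : α * (1 * (⌊-θ / (π * α)⌋ + 1) : ℤ) * π = α * ((⌊-θ/(π * α)⌋ : ℤ) + 1 : ℤ) * π := by
      push_cast; ring
    rw [e]
    exact ⟨c1, c2, Real.sin_pos_of_pos_of_lt_pi c1 c2⟩
end

section
/- Let n̂ ∈ ℂ³ satisfy n̂·n̂ = 1, where the dot product is bilinear (Σᵢ n̂ᵢ², no conjugation), and let k ∈ ℂ. Then |Im(k n̂)|² = (Im k)² + |k|² |Im n̂|², where |k|² = (Re k)² + (Im k)². In particular |Im(k n̂)| ≥ |Im k|, with equality when Im n̂ = 0. -/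
open scoped BigOperators

/-- Let `n̂ ∈ ℂ³` satisfy `n̂·n̂ = 1` (bilinear dot product, no
conjugation) and let `k ∈ ℂ`.  Then `|Im(k n̂)|² = (Im k)² + |k|² |Im n̂|²`, where
`|k|² = (Re k)² + (Im k)²`.  In particular `|Im(k n̂)| ≥ |Im k|`, with equality when
`Im n̂ = 0`. -/
theorem im_norm_of_complex_direction (nhat : Fin 3 → ℂ)
    (hunit : ∑ i, nhat i ^ 2 = 1) (k : ℂ) :
    (∑ i, (k * nhat i).im ^ 2 = k.im ^ 2 + (k.re ^ 2 + k.im ^ 2) * ∑ i, (nhat i).im ^ 2) ∧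
    |k.im| ≤ Real.sqrt (∑ i, (k * nhat i).im ^ 2) ∧
    ((∀ i, (nhat i).im = 0) → Real.sqrt (∑ i, (k * nhat i).im ^ 2) = |k.im|) := by
  simp only [Fin.sum_univ_three] at hunit ⊢
  rw [Complex.ext_iff] at hunit
  obtain ⟨hre, him⟩ := hunit
  simp [Complex.add_re, Complex.add_im, pow_two, Complex.mul_re, Complex.mul_im] at hre him
  have main : (k * nhat 0).im ^ 2 + (k * nhat 1).im ^ 2 + (k * nhat 2).im ^ 2 =
      k.im ^ 2 + (k.re ^ 2 + k.im ^ 2) *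
        ((nhat 0).im ^ 2 + (nhat 1).im ^ 2 + (nhat 2).im ^ 2) := by
    simp only [Complex.mul_im]
    linear_combination k.im ^ 2 * hre + k.re * k.im * him
  refine ⟨main, ?_, ?_⟩
  · rw [main]
    have h1 : k.im ^ 2 ≤ k.im ^ 2 + (k.re ^ 2 + k.im ^ 2) *
        ((nhat 0).im ^ 2 + (nhat 1).im ^ 2 + (nhat 2).im ^ 2) :=
      le_add_of_nonneg_right (by positivity)
    calc |k.im| = Real.sqrt (k.im ^ 2) := (Real.sqrt_sq_eq_abs _).symm
    _ ≤ _ := Real.sqrt_le_sqrt h1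
  · intro h
    rw [main]
    simp [h, Real.sqrt_sq_eq_abs]
end

section
/- Let α, β ∈ ℝ with β < α, let C ∈ ℂ with C ≠ 0, let M ≥ 0, R > 0, and let r : (R, ∞) × ℝ → ℂ satisfy |r(ρ, θ)| ≤ M ρ^β for all ρ > R and θ ∈ ℝ. Suppose that for all ρ > R and all θ ∈ ℝ: Im(C ρ^α e^{iαθ}) + Im r(ρ, θ) ≤ ρ |sin θ|. Then: (i) α ≤ 1; (ii) α is an integer; (iii) Im C ≤ 0; (iv) if α = 1 then C is real with |C| ≤ 1; (v) if α is an odd integer then Im C = 0. (These are the constraints on the leading asymptotic behavior ω = C k^α + O(|k|^β) of a dispersion relation of an isotropic system obeying the covariant stability bound Im ω ≤ |Im k| for complex k.) -/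
open Filter Asymptotics Complex Finset
open scoped Real

/-!
Write `w = e^{iαπ}`. Taking `θ = nπ` kills the right-hand side `ρ |sin θ|`, and dividing by
`ρ^α` leaves `Im (C wⁿ) ≤ 0` for every `n`. The points `C wⁿ` lie on a circle and are
rotated by `w`; unless `w² = 1`, the geometric sums `∑ wⁿ` and `∑ w²ⁿ` stay bounded, so
`∑ Im (C wⁿ)` is bounded while `∑ Im (C wⁿ)² = ∑ (|C|² - Re (C² w²ⁿ))/2` grows linearly —
impossible, since `0 ≤ -Im (C wⁿ) ≤ |C|` gives `Im (C wⁿ)² ≤ |C| · (-Im (C wⁿ))`.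
So `e^{2iαπ} = 1` and `α ∈ ℤ`; `n = 0` gives `Im C ≤ 0`, and `w = -1` for odd `α` gives
`Im C ≥ 0`. Finally, choosing `θ` with `C e^{iαθ} = i|C|` gives `|C| ρ^α ≤ ρ |sin θ| + O(ρ^β)`,
which forces `α ≤ 1`, and `|C| ≤ 1` when `α = 1`.
-/

theorem eventually_rpow_pos (α : ℝ) : ∀ᶠ ρ : ℝ in atTop, 0 < ρ ^ α :=
  (eventually_gt_atTop 0).mono fun _ hρ => Real.rpow_pos_of_pos hρ α

theorem isLittleO_rpow_rpow_atTop {β α : ℝ} (hβα : β < α) :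
    (fun x : ℝ => x ^ β) =o[atTop] fun x => x ^ α := by
  rw [isLittleO_iff_tendsto' ((eventually_rpow_pos α).mono fun _ hx h0 => absurd h0 hx.ne')]
  refine (tendsto_rpow_neg_atTop (sub_pos.mpr hβα)).congr' ?_
  filter_upwards [eventually_gt_atTop 0] with x hx
  rw [neg_sub, Real.rpow_sub hx]

theorem le_of_eventually_mul_le_mul_add_isLittleO {ι : Type*} {l : Filter ι} [l.NeBot]
    {f g : ι → ℝ} {a c : ℝ} (hg : ∀ᶠ x in l, 0 < g x) (hf : f =o[l] g)
    (h : ∀ᶠ x in l, c * g x ≤ a * g x + f x) : c ≤ a := by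
  refine sub_nonpos.mp (ge_of_tendsto hf.tendsto_div_nhds_zero ?_)
  filter_upwards [hg, h] with x hgx hx
  rw [le_div_iff₀ hgx]
  linarith

theorem norm_geom_sum_le {𝕜 : Type*} [NormedDivisionRing 𝕜] {w : 𝕜} (hw : ‖w‖ ≤ 1) (h1 : w ≠ 1)
    (N : ℕ) : ‖∑ n ∈ range N, w ^ n‖ ≤ 2 / ‖w - 1‖ := by
  rw [geom_sum_eq h1, norm_div]
  gcongr
  calc ‖w ^ N - 1‖ ≤ ‖w ^ N‖ + ‖(1 : 𝕜)‖ := norm_sub_le _ _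
    _ ≤ 1 + 1 := by gcongr <;> simp [norm_pow, pow_le_one₀ (norm_nonneg w) hw]
    _ = 2 := one_add_one_eq_two

theorem sq_im_eq (u : ℂ) : u.im ^ 2 = (‖u‖ ^ 2 - (u ^ 2).re) / 2 := by
  rw [pow_two u, mul_re, Complex.sq_norm, normSq_apply]
  ring

theorem sum_sq_im_mul_pow_le {z w : ℂ} (hw : ‖w‖ = 1) (h1 : w ≠ 1)
    (h : ∀ n : ℕ, (z * w ^ n).im ≤ 0) (N : ℕ) :
    ∑ n ∈ range N, (z * w ^ n).im ^ 2 ≤ ‖z‖ * (‖z‖ * (2 / ‖w - 1‖)) := by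
  have hsq : ∀ n : ℕ, (z * w ^ n).im ^ 2 ≤ ‖z‖ * -(z * w ^ n).im := fun n => by
    have habs := (neg_le_abs _).trans (abs_im_le_norm (z * w ^ n))
    rw [norm_mul, norm_pow, hw, one_pow, mul_one] at habs
    nlinarith [h n]
  calc ∑ n ∈ range N, (z * w ^ n).im ^ 2 ≤ ∑ n ∈ range N, ‖z‖ * -(z * w ^ n).im :=
        sum_le_sum fun n _ => hsq n
    _ = ‖z‖ * -(z * ∑ n ∈ range N, w ^ n).im := by
        rw [← mul_sum, sum_neg_distrib, ← im_sum, mul_sum]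
    _ ≤ ‖z‖ * (‖z‖ * (2 / ‖w - 1‖)) := by
        gcongr
        calc -(z * ∑ n ∈ range N, w ^ n).im ≤ ‖z * ∑ n ∈ range N, w ^ n‖ :=
              (neg_le_abs _).trans (abs_im_le_norm _)
          _ ≤ ‖z‖ * (2 / ‖w - 1‖) := by
              rw [norm_mul]; gcongr; exact norm_geom_sum_le hw.le h1 N

theorem sum_sq_im_mul_pow_ge {z w : ℂ} (hw : ‖w‖ = 1) (h2 : w ^ 2 ≠ 1) (N : ℕ) :
    (N * ‖z‖ ^ 2 - ‖z‖ ^ 2 * (2 / ‖w ^ 2 - 1‖)) / 2 ≤ ∑ n ∈ range N, (z * w ^ n).im ^ 2 := by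
  have hterm : ∀ n : ℕ, (z * w ^ n).im ^ 2 = (‖z‖ ^ 2 - (z ^ 2 * (w ^ 2) ^ n).re) / 2 := by
    intro n
    rw [sq_im_eq, norm_mul, norm_pow, hw, one_pow, mul_one, mul_pow, ← pow_mul, ← pow_mul,
      mul_comm n 2]
  have hre : (∑ n ∈ range N, z ^ 2 * (w ^ 2) ^ n).re ≤ ‖z‖ ^ 2 * (2 / ‖w ^ 2 - 1‖) := by
    refine (re_le_norm _).trans ?_
    rw [← mul_sum, norm_mul, norm_pow]
    gcongr
    exact norm_geom_sum_le (by rw [norm_pow, hw, one_pow]) h2 N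
  rw [sum_congr rfl fun n _ => hterm n, ← sum_div, sum_sub_distrib, sum_const, card_range,
    nsmul_eq_mul, ← re_sum]
  linarith

theorem sq_eq_one_of_forall_im_mul_pow_nonpos {z w : ℂ} (hz : z ≠ 0) (hw : ‖w‖ = 1)
    (h : ∀ n : ℕ, (z * w ^ n).im ≤ 0) : w ^ 2 = 1 := by
  by_contra h2
  have h1 : w ≠ 1 := by rintro rfl; exact h2 (one_pow 2)
  have hz2 : 0 < ‖z‖ ^ 2 := by positivity
  obtain ⟨N, hN⟩ := exists_nat_gt (2 * (2 / ‖w - 1‖) + 2 / ‖w ^ 2 - 1‖)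
  have := (sum_sq_im_mul_pow_ge (z := z) hw h2 N).trans (sum_sq_im_mul_pow_le hw h1 h N)
  nlinarith

theorem exists_int_eq_of_exp_I_mul_pi_sq_eq_one {α : ℝ} (h : exp (I * α * π) ^ 2 = 1) :
    ∃ m : ℤ, α = m := by
  rw [← exp_nat_mul, exp_eq_one_iff] at h
  obtain ⟨m, hm⟩ := h
  have h2πI : (2 * π * I : ℂ) ≠ 0 := by simp [Real.pi_ne_zero]
  have : (α : ℂ) = m := mul_right_cancel₀ h2πI (by push_cast at hm; linear_combination hm)
  exact ⟨m, mod_cast this⟩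

theorem exp_I_mul_odd_mul_pi (m : ℤ) : exp (I * ((2 * m + 1 : ℝ) : ℂ) * π) = -1 := by
  have : I * ((2 * m + 1 : ℝ) : ℂ) * π = ((2 * m + 1 : ℤ) : ℂ) * (π * I) := by push_cast; ring
  rw [this, exp_int_mul, exp_pi_mul_I]
  exact Odd.neg_one_zpow ⟨m, rfl⟩

theorem exists_mul_exp_I_mul_eq_I_mul_norm (C : ℂ) {α : ℝ} (hα : α ≠ 0) :
    ∃ θ : ℝ, C * exp (I * α * θ) = I * ‖C‖ := by
  refine ⟨(π / 2 - C.arg) / α, ?_⟩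
  have hα' : (α : ℂ) ≠ 0 := ofReal_ne_zero.mpr hα
  have : I * α * (((π / 2 - C.arg) / α : ℝ) : ℂ) = π / 2 * I - C.arg * I := by
    push_cast; field_simp
  rw [this, exp_sub, exp_pi_div_two_mul_I]
  nth_rewrite 1 [← norm_mul_exp_arg_mul_I C]
  field_simp

/-- The stability bound `Im ω ≤ |Im k|` for `ω = C k^α + r`, `k = ρ e^{iθ}`, with the
remainder already estimated by `|r| ≤ M ρ^β`. -/
def StabilityBound (C : ℂ) (α β M : ℝ) : Prop :=
  ∀ θ : ℝ, ∀ᶠ ρ in atTop, (C * exp (I * α * θ)).im * ρ ^ α ≤ |Real.sin θ| * ρ + M * ρ ^ β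

theorem stabilityBound_of_forall {C : ℂ} {α β M R : ℝ} {r : ℝ → ℝ → ℂ}
    (hr : ∀ ρ θ : ℝ, R < ρ → ‖r ρ θ‖ ≤ M * ρ ^ β)
    (h : ∀ ρ θ : ℝ, R < ρ →
      (C * ((ρ ^ α : ℝ) : ℂ) * exp (I * α * θ)).im + (r ρ θ).im ≤ ρ * |Real.sin θ|) :
    StabilityBound C α β M := fun θ => by
  filter_upwards [eventually_gt_atTop R] with ρ hρ
  have hrθ := (neg_le_abs _).trans ((abs_im_le_norm _).trans (hr ρ θ hρ))
  have hθ := h ρ θ hρ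
  rw [mul_right_comm, im_mul_ofReal] at hθ
  linarith

namespace StabilityBound

variable {C : ℂ} {α β M : ℝ}

theorem im_mul_pow_nonpos (hs : StabilityBound C α β M) (hβα : β < α) (n : ℕ) :
    (C * exp (I * α * π) ^ n).im ≤ 0 := by
  refine le_of_eventually_mul_le_mul_add_isLittleO (eventually_rpow_pos α)
    ((isLittleO_rpow_rpow_atTop hβα).const_mul_left M) ?_
  have hexp : exp (I * α * ((n * π : ℝ) : ℂ)) = exp (I * α * π) ^ n := by
    rw [← exp_nat_mul]; push_cast; ring_nf
  filter_upwards [hs (n * π)] with ρ hρ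
  rw [Real.sin_nat_mul_pi, abs_zero, zero_mul, zero_add, hexp] at hρ
  linarith

theorem im_nonpos (hs : StabilityBound C α β M) (hβα : β < α) : C.im ≤ 0 := by
  simpa using hs.im_mul_pow_nonpos hβα 0

theorem im_eq_zero_of_odd (hs : StabilityBound C α β M) (hβα : β < α) (m : ℤ)
    (hm : α = 2 * m + 1) : C.im = 0 := by
  have h1 := hs.im_mul_pow_nonpos hβα 1
  rw [pow_one, hm, exp_I_mul_odd_mul_pi, mul_neg_one, neg_im] at h1
  linarith [hs.im_nonpos hβα]

theorem exists_int_eq (hs : StabilityBound C α β M) (hβα : β < α) (hC : C ≠ 0) :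
    ∃ m : ℤ, α = m :=
  exists_int_eq_of_exp_I_mul_pi_sq_eq_one
    (sq_eq_one_of_forall_im_mul_pow_nonpos hC (by simp [norm_exp]) (hs.im_mul_pow_nonpos hβα))

theorem le_one (hs : StabilityBound C α β M) (hβα : β < α) (hC : C ≠ 0) : α ≤ 1 := by
  by_contra! h1α
  obtain ⟨θ, hθ⟩ := exists_mul_exp_I_mul_eq_I_mul_norm C (by linarith : α ≠ 0)
  have hlin : (fun ρ : ℝ => |Real.sin θ| * ρ) =o[atTop] fun ρ => ρ ^ α := by
    simpa using (isLittleO_rpow_rpow_atTop h1α).const_mul_left |Real.sin θ|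
  have hMo := (isLittleO_rpow_rpow_atTop hβα).const_mul_left M
  have := le_of_eventually_mul_le_mul_add_isLittleO (c := ‖C‖) (a := 0)
    (eventually_rpow_pos α) (hlin.add hMo) ((hs θ).mono fun ρ hρ => by simpa [hθ] using hρ)
  exact (norm_pos_iff.mpr hC).not_ge this

theorem norm_le_one (hs : StabilityBound C α β M) (hβα : β < α) (hα : α = 1) : ‖C‖ ≤ 1 := by
  obtain ⟨θ, hθ⟩ := exists_mul_exp_I_mul_eq_I_mul_norm C (by simp [hα] : α ≠ 0)
  refine (le_of_eventually_mul_le_mul_add_isLittleO (eventually_rpow_pos α)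
    ((isLittleO_rpow_rpow_atTop hβα).const_mul_left M) ?_).trans (Real.abs_sin_le_one θ)
  filter_upwards [hs θ] with ρ hρ
  rw [hθ] at hρ
  simpa [hα] using hρ

end StabilityBound

theorem stable_isotropic_leading_asymptotics_general (α β : ℝ) (hβα : β < α)
    (C : ℂ) (hC : C ≠ 0) (M R : ℝ)
    (r : ℝ → ℝ → ℂ)
    (hr : ∀ ρ θ : ℝ, R < ρ → ‖r ρ θ‖ ≤ M * ρ ^ β)
    (h : ∀ ρ θ : ℝ, R < ρ →
      (C * ((ρ ^ α : ℝ) : ℂ) * Complex.exp (Complex.I * α * θ)).im + (r ρ θ).im ≤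
        ρ * |Real.sin θ|) :
    α ≤ 1 ∧ (∃ m : ℤ, α = m) ∧ C.im ≤ 0 ∧
      (α = 1 → C.im = 0 ∧ ‖C‖ ≤ 1) ∧
      (∀ m : ℤ, α = 2 * m + 1 → C.im = 0) := by
  have hs := stabilityBound_of_forall hr h
  exact ⟨hs.le_one hβα hC, hs.exists_int_eq hβα hC, hs.im_nonpos hβα,
    fun hα => ⟨hs.im_eq_zero_of_odd hβα 0 (by simp [hα]), hs.norm_le_one hβα hα⟩,
    hs.im_eq_zero_of_odd hβα⟩

/-- Constraints on the leading asymptotic behavior `ω = C k^α + O(|k|^β)`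
of a dispersion relation of an isotropic system obeying the covariant stability bound
`Im ω ≤ |Im k|` for complex `k = ρ e^{iθ}`.  If `β < α`, `C ≠ 0`, `|r(ρ,θ)| ≤ M ρ^β` for
`ρ > R`, and `Im(C ρ^α e^{iαθ}) + Im r(ρ,θ) ≤ ρ |sin θ|` for all `ρ > R`, `θ ∈ ℝ`, then:
(i) `α ≤ 1`; (ii) `α` is an integer; (iii) `Im C ≤ 0`; (iv) if `α = 1` then `C` is real with
`|C| ≤ 1`; (v) if `α` is an odd integer then `Im C = 0`. -/
theorem stable_isotropic_leading_asymptotics (α β : ℝ) (hβα : β < α)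
    (C : ℂ) (hC : C ≠ 0) (M R : ℝ) (hM : 0 ≤ M) (hR : 0 < R)
    (r : ℝ → ℝ → ℂ)
    (hr : ∀ ρ θ : ℝ, R < ρ → ‖r ρ θ‖ ≤ M * ρ ^ β)
    (h : ∀ ρ θ : ℝ, R < ρ →
      (C * ((ρ ^ α : ℝ) : ℂ) * Complex.exp (Complex.I * α * θ)).im + (r ρ θ).im ≤
        ρ * |Real.sin θ|) :
    α ≤ 1 ∧ (∃ m : ℤ, α = m) ∧ C.im ≤ 0 ∧
      (α = 1 → C.im = 0 ∧ ‖C‖ ≤ 1) ∧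
      (∀ m : ℤ, α = 2 * m + 1 → C.im = 0) :=
  stable_isotropic_leading_asymptotics_general α β hβα C hC M R r hr h
end

section
/- Let C ∈ ℝ, let D ∈ ℂ with D ≠ 0, let β′ < β < 1 with β > 0, let M ≥ 0, R > 0, b ∈ ℝ, and let r : (R, ∞) × ℝ → ℂ satisfy |r(ρ, θ)| ≤ M ρ^{β′} for all ρ > R and θ ∈ ℝ. Then it is impossible that for all ρ > R and all θ ∈ ℝ: Im(C ρ e^{iθ} + D ρ^β e^{iβθ}) + Im r(ρ, θ) ≤ ρ |sin θ| + b. Consequently, if a dispersion relation ω = C k + D k^β + O(|k|^{β′}) with real leading coefficient C satisfies the improved causality criterion Im ω ≤ |Im k| + b for large complex k, then its next-to-leading exponent obeys β ≤ 0. -/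
/-!
Take `θ = Nπ` with `N ∈ ℤ`. Then `sin θ = 0`, so the leading term `C k` (with `C` real) has no
imaginary part and the right-hand side is just `b`, while the next-to-leading term has imaginary
part `ρ^β ‖D‖ sin (arg D + Nβπ)`. Since `0 < βπ < π`, some multiple `Nβπ` lands `arg D + Nβπ`
in `(2π, 3π)`, where the sine is positive. The criterion then bounds `A ρ^β - M ρ^{β'}` by `b`
for a constant `A > 0`, which is absurd as `ρ → ∞` because `β' < β`.
-/

open Filter Complex
open scoped Real

lemma exists_int_sin_add_int_mul_pos (t : ℝ) {s : ℝ} (hs₀ : 0 < s) (hsπ : s < π) :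
    ∃ N : ℤ, 0 < Real.sin (t + N * s) := by
  obtain ⟨N, ⟨hlo, hhi⟩, -⟩ := existsUnique_add_zsmul_mem_Ioc hs₀ t (2 * π)
  rw [zsmul_eq_mul] at hlo hhi
  refine ⟨N, ?_⟩
  rw [← Real.sin_sub_two_pi]
  exact Real.sin_pos_of_pos_of_lt_pi (by linarith) (by linarith)

lemma im_ofReal_mul_ofReal_mul_exp_I_mul (a b θ : ℝ) :
    ((a : ℂ) * b * exp (I * θ)).im = a * b * Real.sin θ := by
  rw [mul_comm I, ← ofReal_mul, im_ofReal_mul, exp_ofReal_mul_I_im]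

lemma im_mul_ofReal_mul_exp_I_mul (D : ℂ) (a φ : ℝ) :
    (D * a * exp (I * φ)).im = a * ‖D‖ * Real.sin (arg D + φ) := by
  have hpolar : D * a * exp (I * φ) = ((a * ‖D‖ : ℝ) : ℂ) * exp ((arg D + φ : ℝ) * I) := by
    conv_lhs => rw [← norm_mul_exp_arg_mul_I D]
    rw [ofReal_add, add_mul, Complex.exp_add]
    push_cast
    ring_nf
  rw [hpolar, im_ofReal_mul, exp_ofReal_mul_I_im]

lemma tendsto_mul_rpow_sub_mul_rpow_atTop {A β β' : ℝ} (M : ℝ) (hA : 0 < A) (hβ : 0 < β)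
    (hβ' : β' < β) : Tendsto (fun ρ : ℝ => A * ρ ^ β - M * ρ ^ β') atTop atTop := by
  have hcoef : Tendsto (fun ρ : ℝ => A - M * ρ ^ (β' - β)) atTop (nhds A) := by
    have h := tendsto_rpow_neg_atTop (sub_pos.mpr hβ')
    simpa [neg_sub] using tendsto_const_nhds.sub (h.const_mul M)
  refine ((tendsto_rpow_atTop hβ).atTop_mul_pos hA hcoef).congr' ?_
  filter_upwards [eventually_gt_atTop 0] with ρ hρ
  rw [mul_sub, mul_left_comm, ← Real.rpow_add hρ, add_sub_cancel, mul_comm]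

theorem causal_next_to_leading_exponent_nonpositive_general (C : ℝ) (D : ℂ) (hD : D ≠ 0)
    (β β' : ℝ) (hβ' : β' < β) (hβ1 : β < 1) (hβ0 : 0 < β)
    (M R : ℝ) (b : ℝ)
    (r : ℝ → ℝ → ℂ)
    (hr : ∀ ρ θ : ℝ, R < ρ → ‖r ρ θ‖ ≤ M * ρ ^ β') :
    ¬ (∀ ρ θ : ℝ, R < ρ →
        ((C : ℂ) * ρ * Complex.exp (Complex.I * θ) +
            D * ((ρ ^ β : ℝ) : ℂ) * Complex.exp (Complex.I * β * θ)).im + (r ρ θ).im ≤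
          ρ * |Real.sin θ| + b) := by
  intro hcausal
  obtain ⟨N, hN⟩ := exists_int_sin_add_int_mul_pos (arg D) (mul_pos hβ0 Real.pi_pos)
    (mul_lt_of_lt_one_left Real.pi_pos hβ1)
  set A := ‖D‖ * Real.sin (arg D + N * (β * π))
  have hA : 0 < A := mul_pos (norm_pos_iff.mpr hD) hN
  have hbound : ∀ ρ, R < ρ → A * ρ ^ β - M * ρ ^ β' ≤ b := by
    intro ρ hρ
    have hρθ := hcausal ρ (N * π) hρ
    rw [add_im, im_ofReal_mul_ofReal_mul_exp_I_mul, mul_assoc I, ← ofReal_mul,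
      im_mul_ofReal_mul_exp_I_mul, Real.sin_int_mul_pi,
      show β * (N * π) = N * (β * π) by ring] at hρθ
    have hrem := neg_le_of_abs_le ((abs_im_le_norm _).trans (hr ρ (N * π) hρ))
    simp only [mul_zero, abs_zero, zero_add] at hρθ
    linarith
  obtain ⟨ρ, hlarge, hρ⟩ :=
    (((tendsto_mul_rpow_sub_mul_rpow_atTop M hA hβ0 hβ').eventually_gt_atTop b).and
      (eventually_gt_atTop R)).exists
  exact (hbound ρ hρ).not_gt hlarge

/-- A dispersion relation `ω = C k + D k^β + O(|k|^{β'})` with real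
leading coefficient `C` and next-to-leading exponent `β ∈ (0,1)`, `D ≠ 0`, cannot satisfy
the improved causality criterion `Im ω ≤ |Im k| + b` for all large complex `k = ρ e^{iθ}`:
consequently the next-to-leading exponent of such a causal dispersion relation obeys
`β ≤ 0`. -/
theorem causal_next_to_leading_exponent_nonpositive (C : ℝ) (D : ℂ) (hD : D ≠ 0)
    (β β' : ℝ) (hβ' : β' < β) (hβ1 : β < 1) (hβ0 : 0 < β)
    (M R : ℝ) (hM : 0 ≤ M) (hR : 0 < R) (b : ℝ)
    (r : ℝ → ℝ → ℂ)
    (hr : ∀ ρ θ : ℝ, R < ρ → ‖r ρ θ‖ ≤ M * ρ ^ β') :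
    ¬ (∀ ρ θ : ℝ, R < ρ →
        ((C : ℂ) * ρ * Complex.exp (Complex.I * θ) +
            D * ((ρ ^ β : ℝ) : ℂ) * Complex.exp (Complex.I * β * θ)).im + (r ρ θ).im ≤
          ρ * |Real.sin θ| + b) :=
  causal_next_to_leading_exponent_nonpositive_general C D hD β β' hβ' hβ1 hβ0 M R b r hr
end

section
/- Let C ∈ ℝ with C ≠ 0, let α be an integer with α ≤ 1, let D ∈ ℂ with D ≠ 0, let β′ < β < α, let M ≥ 0, R > 0, and let r : (R, ∞) × ℝ → ℂ satisfy |r(ρ, θ)| ≤ M ρ^{β′} for all ρ > R and θ ∈ ℝ. Suppose for all ρ > R and all θ ∈ ℝ: Im(C ρ^α e^{iαθ} + D ρ^β e^{iβθ}) + Im r(ρ, θ) ≤ ρ |sin θ|. Then β is an integer and Im D ≤ 0. (This fixes the next-to-leading term of a covariantly stable isotropic dispersion relation ω = C k^α + D k^β + O(|k|^{β′}) with real leading coefficient.) -/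
/-!
At `θ = nπ` the leading term `C ρ^α e^{iαnπ} = ±C ρ^α` is real and `sin θ = 0`, so the stability
inequality reads `ρ^β Im(D ζ^n) ≤ M ρ^{β'}` with `ζ = e^{iπβ}`; letting `ρ → ∞` gives
`Im(D ζ^n) ≤ 0` for every `n ∈ ℕ`. For `n = 0` this is `Im D ≤ 0`. If `β` were not an integer,
`ζ` would be a non-real point of the unit circle, and repeated rotation by `ζ` would eventually
carry `D ≠ 0` into the open upper half-plane.
-/

open Complex Filter Real Topology Finset

lemma nonpos_of_eventually_rpow_mul_le {a M β β' : ℝ} (hβ' : β' < β)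
    (h : ∀ᶠ ρ in atTop, ρ ^ β * a ≤ M * ρ ^ β') : a ≤ 0 := by
  have hlim : Tendsto (fun ρ : ℝ => M * ρ ^ (-(β - β'))) atTop (𝓝 0) := by
    simpa using (tendsto_rpow_neg_atTop (sub_pos.2 hβ')).const_mul M
  refine ge_of_tendsto hlim ?_
  filter_upwards [h, eventually_gt_atTop 0] with ρ hρ hρ0
  rw [Real.rpow_neg hρ0.le, Real.rpow_sub hρ0, ← div_eq_mul_inv, div_div_eq_mul_div,
    le_div_iff₀ (Real.rpow_pos_of_pos hρ0 β), mul_comm]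
  exact hρ

lemma norm_geom_sum_le_of_norm_eq_one {ζ : ℂ} (hζ : ‖ζ‖ = 1) (hζ1 : ζ ≠ 1) (N : ℕ) :
    ‖∑ n ∈ range N, ζ ^ n‖ ≤ 2 / ‖ζ - 1‖ := by
  rw [geom_sum_eq hζ1, norm_div]
  gcongr
  calc ‖ζ ^ N - 1‖ ≤ ‖ζ ^ N‖ + ‖(1 : ℂ)‖ := norm_sub_le _ _
    _ = 2 := by rw [norm_pow, hζ, one_pow, norm_one]; norm_num

/-- Were all `(D * ζ ^ n).im ≤ 0`, their partial sums would be bounded (geometric series), so they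
would tend to `0`; as `ζ.im ≠ 0`, so would the real parts, contradicting `‖D * ζ ^ n‖ = ‖D‖`. -/
lemma exists_pos_im_mul_pow {D ζ : ℂ} (hD : D ≠ 0) (hζ : ‖ζ‖ = 1) (hζim : ζ.im ≠ 0) :
    ∃ n : ℕ, 0 < (D * ζ ^ n).im := by
  by_contra! hnonpos
  have hζ1 : ζ ≠ 1 := fun h => hζim (by simp [h])
  have hsum : Summable fun n => -(D * ζ ^ n).im := by
    refine summable_of_sum_range_le (c := ‖D‖ * (2 / ‖ζ - 1‖)) (fun n => neg_nonneg.2 (hnonpos n))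
      fun N => ?_
    calc ∑ n ∈ range N, -(D * ζ ^ n).im = -(D * ∑ n ∈ range N, ζ ^ n).im := by
          rw [mul_sum, im_sum, sum_neg_distrib]
      _ ≤ ‖D * ∑ n ∈ range N, ζ ^ n‖ := (neg_le_abs _).trans (abs_im_le_norm _)
      _ ≤ ‖D‖ * (2 / ‖ζ - 1‖) := by
          rw [norm_mul]; gcongr; exact norm_geom_sum_le_of_norm_eq_one hζ hζ1 N
  have him : Tendsto (fun n => (D * ζ ^ n).im) atTop (𝓝 0) := by
    simpa using hsum.tendsto_atTop_zero.neg
  have hre : Tendsto (fun n => (D * ζ ^ n).re) atTop (𝓝 0) := by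
    have hshift : Tendsto (fun n => (D * ζ ^ (n + 1)).im) atTop (𝓝 0) :=
      (tendsto_add_atTop_iff_nat 1).2 him
    have hsplit : ∀ n, (D * ζ ^ n).re =
        ((D * ζ ^ (n + 1)).im - (D * ζ ^ n).im * ζ.re) / ζ.im := by
      intro n
      rw [eq_div_iff hζim, pow_succ, ← mul_assoc, mul_im]
      ring
    simpa [hsplit] using (hshift.sub (him.mul_const ζ.re)).div_const ζ.im
  have hnormSq : ∀ n, (D * ζ ^ n).re * (D * ζ ^ n).re + (D * ζ ^ n).im * (D * ζ ^ n).im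
      = ‖D‖ ^ 2 := by
    intro n
    rw [← normSq_apply, normSq_eq_norm_sq, norm_mul, norm_pow, hζ, one_pow, mul_one]
  have hlim := (hre.mul hre).add (him.mul him)
  simp only [hnormSq, mul_zero, add_zero, tendsto_const_nhds_iff] at hlim
  exact hD (by simpa using hlim)

lemma im_dispersion_at_nat_mul_pi (c a b : ℝ) (α : ℤ) (β : ℝ) (D : ℂ) (n : ℕ) :
    ((c : ℂ) * (a : ℂ) * Complex.exp (Complex.I * (α : ℝ) * ((n * π : ℝ) : ℂ)) +
        D * (b : ℂ) * Complex.exp (Complex.I * β * ((n * π : ℝ) : ℂ))).im =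
      b * (D * Complex.exp ((π * β : ℝ) * Complex.I) ^ n).im := by
  have hargα : Complex.I * (α : ℝ) * ((n * π : ℝ) : ℂ) = ((α * n : ℤ) * π : ℝ) * I := by
    push_cast; ring
  have hargβ : Complex.I * β * ((n * π : ℝ) : ℂ) = n * ((π * β : ℝ) * I) := by
    push_cast; ring
  rw [hargα, hargβ, Complex.exp_nat_mul, add_im, mul_im, exp_ofReal_mul_I_im, Real.sin_int_mul_pi,
    mul_comm D, mul_assoc, ← ofReal_mul, im_ofReal_mul]
  simp only [ofReal_im, mul_zero, zero_mul, zero_add]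

theorem stable_isotropic_next_to_leading_term_general (C : ℝ)
    (α : ℤ) (D : ℂ) (hD : D ≠ 0)
    (β β' : ℝ) (hβ' : β' < β)
    (M R : ℝ)
    (r : ℝ → ℝ → ℂ)
    (hr : ∀ ρ θ : ℝ, R < ρ → ‖r ρ θ‖ ≤ M * ρ ^ β')
    (h : ∀ ρ θ : ℝ, R < ρ →
      ((C : ℂ) * ((ρ ^ (α : ℝ) : ℝ) : ℂ) * Complex.exp (Complex.I * (α : ℝ) * θ) +
          D * ((ρ ^ β : ℝ) : ℂ) * Complex.exp (Complex.I * β * θ)).im + (r ρ θ).im ≤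
        ρ * |Real.sin θ|) :
    (∃ m : ℤ, β = m) ∧ D.im ≤ 0 := by
  set ζ := Complex.exp ((π * β : ℝ) * Complex.I)
  have him_nonpos : ∀ n : ℕ, (D * ζ ^ n).im ≤ 0 := by
    intro n
    refine nonpos_of_eventually_rpow_mul_le hβ' (M := M) ?_
    filter_upwards [eventually_gt_atTop R] with ρ hρ
    have hstable := h ρ (n * π) hρ
    rw [im_dispersion_at_nat_mul_pi, Real.sin_nat_mul_pi, abs_zero, mul_zero] at hstable
    linarith [neg_le_of_abs_le ((abs_im_le_norm _).trans (hr ρ (n * π) hρ))]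
  refine ⟨?_, by simpa using him_nonpos 0⟩
  by_contra hβZ
  have hζim : ζ.im ≠ 0 := by
    rw [exp_ofReal_mul_I_im, Ne, Real.sin_eq_zero_iff]
    rintro ⟨m, hm⟩
    exact hβZ ⟨m, mul_left_cancel₀ Real.pi_ne_zero (by linarith)⟩
  obtain ⟨n, hn⟩ := exists_pos_im_mul_pow hD (norm_exp_ofReal_mul_I _) hζim
  exact (him_nonpos n).not_gt hn

/-- The next-to-leading term of a covariantly stable isotropic dispersion
relation `ω = C k^α + D k^β + O(|k|^{β'})` with real nonzero leading coefficient `C`,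
integer `α ≤ 1`, `D ≠ 0` and `β' < β < α`: if
`Im(C ρ^α e^{iαθ} + D ρ^β e^{iβθ}) + Im r(ρ,θ) ≤ ρ |sin θ|` for all `ρ > R`, `θ ∈ ℝ`, then
`β` is an integer and `Im D ≤ 0`. -/
theorem stable_isotropic_next_to_leading_term (C : ℝ) (hC : C ≠ 0)
    (α : ℤ) (hα : α ≤ 1) (D : ℂ) (hD : D ≠ 0)
    (β β' : ℝ) (hβ' : β' < β) (hβα : β < (α : ℝ))
    (M R : ℝ) (hM : 0 ≤ M) (hR : 0 < R)
    (r : ℝ → ℝ → ℂ)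
    (hr : ∀ ρ θ : ℝ, R < ρ → ‖r ρ θ‖ ≤ M * ρ ^ β')
    (h : ∀ ρ θ : ℝ, R < ρ →
      ((C : ℂ) * ((ρ ^ (α : ℝ) : ℝ) : ℂ) * Complex.exp (Complex.I * (α : ℝ) * θ) +
          D * ((ρ ^ β : ℝ) : ℂ) * Complex.exp (Complex.I * β * θ)).im + (r ρ θ).im ≤
        ρ * |Real.sin θ|) :
    (∃ m : ℤ, β = m) ∧ D.im ≤ 0 :=
  stable_isotropic_next_to_leading_term_general C α D hD β β' hβ' M R r hr h
end

section
/- Let m₀ ≥ 0, ω ∈ ℂ, and k ∈ ℂ³, and suppose ω² = k·k − m₀², where k·k = Σᵢ kᵢ² (bilinear, no conjugation). Then (Im ω)² ≤ |Im k|² + m₀², and consequently Im ω ≤ |Im k| + m₀. (Thus the tachyon field equation (∂ₜ² − ∇² − m₀²)φ = 0 satisfies the improved causality criterion Im ω ≤ |Im k| + b with b = m₀ for every complex wave vector.) -/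
open scoped BigOperators

set_option maxHeartbeats 1000000 in
lemma tachyon_aux (m a b r0 r1 r2 i0 i1 i2 : ℝ) (hm : 0 ≤ m)
    (hre : a * a - b * b
      = r0 * r0 - i0 * i0 + (r1 * r1 - i1 * i1) + (r2 * r2 - i2 * i2) - m * m)
    (him : a * b + b * a
      = r0 * i0 + i0 * r0 + (r1 * i1 + i1 * r1) + (r2 * i2 + i2 * r2)) :
    b * b ≤ i0 * i0 + i1 * i1 + i2 * i2 + m * m ∧
      b ≤ Real.sqrt (i0 * i0 + i1 * i1 + i2 * i2) + m := by
  have hRnn : (0:ℝ) ≤ r0 * r0 + r1 * r1 + r2 * r2 :=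
    add_nonneg (add_nonneg (mul_self_nonneg r0) (mul_self_nonneg r1)) (mul_self_nonneg r2)
  have hIvnn : (0:ℝ) ≤ i0 * i0 + i1 * i1 + i2 * i2 :=
    add_nonneg (add_nonneg (mul_self_nonneg i0) (mul_self_nonneg i1)) (mul_self_nonneg i2)
  have hCS : (r0 * i0 + r1 * i1 + r2 * i2) ^ 2
      ≤ (r0 * r0 + r1 * r1 + r2 * r2) * (i0 * i0 + i1 * i1 + i2 * i2) := by
    nlinarith [sq_nonneg (r0*i1 - r1*i0), sq_nonneg (r0*i2 - r2*i0),
      sq_nonneg (r1*i2 - r2*i1)]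
  have key : b * b ≤ i0 * i0 + i1 * i1 + i2 * i2 + m * m := by
    by_contra h
    push_neg at h
    have hAR : r0 * r0 + r1 * r1 + r2 * r2 < a * a := by nlinarith
    have hab : a * b = r0 * i0 + r1 * i1 + r2 * i2 := by linarith
    have h1 : 0 < (a * a - (r0 * r0 + r1 * r1 + r2 * r2)) *
        (b * b - (i0 * i0 + i1 * i1 + i2 * i2) - m * m) :=
      mul_pos (by linarith) (by linarith)
    have h2 : 0 ≤ (a * a - (r0 * r0 + r1 * r1 + r2 * r2)) *
        ((i0 * i0 + i1 * i1 + i2 * i2) + m * m) :=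
      mul_nonneg (by linarith) (by nlinarith [mul_self_nonneg m])
    have h3 : 0 ≤ (r0 * r0 + r1 * r1 + r2 * r2) *
        (b * b - (i0 * i0 + i1 * i1 + i2 * i2)) :=
      mul_nonneg hRnn (by nlinarith [mul_self_nonneg m])
    have hab2 : (a * a) * (b * b) = (r0 * i0 + r1 * i1 + r2 * i2) ^ 2 := by
      rw [← hab]; ring
    nlinarith [hCS, hab2, h1, h2, h3]
  refine ⟨key, ?_⟩
  have hs := Real.sq_sqrt (add_nonneg hIvnn (mul_self_nonneg m))
  have ht := Real.sq_sqrt hIvnn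
  have hsn := Real.sqrt_nonneg (i0 * i0 + i1 * i1 + i2 * i2 + m * m)
  have htn := Real.sqrt_nonneg (i0 * i0 + i1 * i1 + i2 * i2)
  have h1 : b ≤ Real.sqrt (i0 * i0 + i1 * i1 + i2 * i2 + m * m) := by
    nlinarith [key]
  nlinarith [h1]

/-- Let `m₀ ≥ 0`, `ω ∈ ℂ`, `k ∈ ℂ³` with `ω² = k·k − m₀²` (the tachyon
dispersion relation, bilinear dot product).  Then `(Im ω)² ≤ |Im k|² + m₀²`, and
consequently `Im ω ≤ |Im k| + m₀`: the tachyon field equation satisfies the improved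
causality criterion with `b = m₀` for every complex wave vector. -/
theorem tachyon_satisfies_improved_causality (m₀ : ℝ) (hm₀ : 0 ≤ m₀)
    (ω : ℂ) (k : Fin 3 → ℂ)
    (hdisp : ω ^ 2 = ∑ i, k i ^ 2 - (m₀ : ℂ) ^ 2) :
    ω.im ^ 2 ≤ (∑ i, (k i).im ^ 2) + m₀ ^ 2 ∧
      ω.im ≤ Real.sqrt (∑ i, (k i).im ^ 2) + m₀ := by
  have hre := congrArg Complex.re hdisp
  have him := congrArg Complex.im hdisp
  simp only [Fin.sum_univ_three, pow_two, Complex.mul_re, Complex.mul_im,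
    Complex.add_re, Complex.add_im, Complex.sub_re, Complex.sub_im,
    Complex.ofReal_re, Complex.ofReal_im, mul_zero, zero_mul, sub_zero,
    add_zero, zero_add] at hre him ⊢
  obtain ⟨h1, h2⟩ := tachyon_aux m₀ ω.re ω.im (k 0).re (k 1).re (k 2).re
    (k 0).im (k 1).im (k 2).im hm₀ (by linarith) (by linarith)
  exact ⟨by linarith, by linarith⟩
end

section
/- Let τ > 0, ζ̄ > 0, and c² > 0 be real constants. Then for every real k, every complex root ω of the cubic equation i τ ω³ − ω² − i(ζ̄ + c² τ) ω k² + c² k² = 0 satisfies Im ω ≤ 0; moreover Im ω < 0 for every nonzero root when k ≠ 0. (This is the rest-frame linear stability of the simplified Müller–Israel–Stewart theory with bulk viscous pressure, whose nonzero linear modes satisfy this cubic with τ the bulk relaxation time, ζ̄ = ζ/(e+p) the reduced bulk viscosity, and c² the speed of sound squared.) -/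
/-- Rest-frame linear stability of the simplified
Müller–Israel–Stewart theory with bulk viscous pressure.  Let `τ > 0`, `ζ̄ > 0`, `c² > 0`.
Then for every real `k`, every complex root `ω` of
`i τ ω³ − ω² − i(ζ̄ + c²τ) ω k² + c² k² = 0` satisfies `Im ω ≤ 0`; moreover `Im ω < 0` for
every nonzero root when `k ≠ 0`. -/
theorem MIS_bulk_rest_frame_stability (τ ζbar c2 : ℝ)
    (hτ : 0 < τ) (hζ : 0 < ζbar) (hc : 0 < c2) (k : ℝ) (ω : ℂ)
    (hroot : Complex.I * τ * ω ^ 3 - ω ^ 2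
        - Complex.I * (ζbar + c2 * τ) * ω * (k : ℂ) ^ 2 + c2 * (k : ℂ) ^ 2 = 0) :
    ω.im ≤ 0 ∧ (k ≠ 0 → ω ≠ 0 → ω.im < 0) := by
  have hre := congrArg Complex.re hroot
  have him := congrArg Complex.im hroot
  simp [Complex.ext_iff, pow_succ, Complex.mul_re, Complex.mul_im] at hre him
  ring_nf at hre him
  set a := ω.re with ha_def
  set b := ω.im with hb_def
  have hle : b ≤ 0 := by
    by_contra hb'
    push_neg at hb'
    rcases eq_or_ne a 0 with ha | ha
    · rw [ha] at hre
      nlinarith [sq_nonneg k, pow_pos hb' 3, mul_pos hb' hb', mul_pos hτ (pow_pos hb' 3),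
        mul_nonneg (mul_nonneg hτ.le hb'.le) (mul_nonneg hc.le (sq_nonneg k)),
        mul_nonneg hb'.le (mul_nonneg hζ.le (sq_nonneg k)),
        mul_nonneg hc.le (sq_nonneg k)]
    · have key : τ * a ^ 2 - 3 * τ * b ^ 2 - 2 * b - (ζbar + c2 * τ) * k ^ 2 = 0 := by
        have h2 : a * (τ * a ^ 2 - 3 * τ * b ^ 2 - 2 * b - (ζbar + c2 * τ) * k ^ 2) = 0 := by
          linear_combination him
        rcases mul_eq_zero.mp h2 with h | h
        · exact absurd h ha
        · exact h
      have h3 : 8 * τ ^ 2 * b ^ 3 + 8 * τ * b ^ 2 + 2 * b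
          + 2 * τ * ((ζbar + c2 * τ) * k ^ 2) * b + ζbar * k ^ 2 = 0 := by
        linear_combination (-(3 * τ * b + 1)) * key - τ * hre
      have hB : 0 ≤ (ζbar + c2 * τ) * k ^ 2 := by positivity
      nlinarith [mul_pos (mul_pos hτ hτ) (pow_pos hb' 3), mul_pos hτ (mul_pos hb' hb'),
        mul_nonneg (mul_nonneg hτ.le hB) hb'.le, mul_nonneg hζ.le (sq_nonneg k)]
  refine ⟨hle, fun hk hω => ?_⟩
  rcases lt_or_eq_of_le hle with h | hb0
  · exact h
  · exfalso
    have hb0' : b = 0 := hb0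
    rw [hb0'] at hre him
    have hk2 : 0 < k ^ 2 := by positivity
    have ha2 : a ^ 2 = c2 * k ^ 2 := by linarith [hre]
    have ha : a ≠ 0 := by
      intro h0
      rw [h0] at ha2
      nlinarith
    have h2 : a * (τ * a ^ 2 - τ * c2 * k ^ 2 - ζbar * k ^ 2) = 0 := by
      linear_combination him
    rcases mul_eq_zero.mp h2 with h | h
    · exact ha h
    · nlinarith [mul_pos hζ hk2]
end

section
/- Let η = diag(1,−1,−1,−1), let u ∈ ℝ⁴ satisfy η_{μν}u^μu^ν = 1, and let ψ ∈ ℝ⁴ be a real covector. Set B = u^μψ_μ, V^α = (η^{αμ} − u^αu^μ)ψ_μ, and V² = η_{αβ}V^αV^β. Let E > 0, τ > 0, and c², ζ ∈ ℝ satisfy 0 ≤ c² + ζ/(τ E) ≤ 1. If ψ satisfies the nontrivial characteristic equation τ E B² + [τ c² E + ζ] V² = 0, then ψ is non-timelike: η^{μν} ψ_μ ψ_ν = B² + V² ≤ 0. (This is the nonlinear causality of the Müller–Israel–Stewart theory with bulk viscosity: under 0 ≤ c² + ζ/(τ(e+p+Π)) ≤ 1 all characteristic covectors lie outside or on the light cone.)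 -/
/-!
Raise the index of `ψ` and split it as `B u + V` with `V` η-orthogonal to `u`; then
`η(ψ, ψ) = B² + V²`, and `V² ≤ 0` because `V` is orthogonal to a timelike vector. Dividing the
characteristic equation by `τE` gives `B² = -s V²` with `s = c² + ζ/(τE)`, so
`B² + V² = (1 - s) V² ≤ 0` as soon as `s ≤ 1`.
-/

open scoped BigOperators

noncomputable def minkowskiForm (x y : Fin 4 → ℝ) : ℝ :=
  ∑ μ, ∑ ν, minkowskiEta μ ν * x μ * y ν

noncomputable def minkowskiProj (u ψ : Fin 4 → ℝ) : Fin 4 → ℝ :=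
  fun a => ∑ μ, (minkowskiEta a μ - u a * u μ) * ψ μ

lemma minkowskiForm_apply (x y : Fin 4 → ℝ) :
    minkowskiForm x y = x 0 * y 0 - x 1 * y 1 - x 2 * y 2 - x 3 * y 3 := by
  simp only [minkowskiForm, minkowskiEta, Matrix.diagonal_apply, ite_mul, zero_mul,
    Finset.sum_ite_eq, Finset.mem_univ, if_true, Fin.sum_univ_four, Matrix.cons_val_zero,
    Matrix.cons_val_one, Matrix.cons_val]
  ring

lemma minkowskiProj_apply (u ψ : Fin 4 → ℝ) (a : Fin 4) :
    minkowskiProj u ψ a = ![1, -1, -1, -1] a * ψ a - u a * ∑ μ, u μ * ψ μ := by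
  simp only [minkowskiProj, sub_mul, Finset.sum_sub_distrib, mul_assoc, ← Finset.mul_sum]
  exact congrArg (· - _) (Matrix.mulVec_diagonal _ ψ a)

/-- Orthogonality reads `u₀ v₀ = u⃗ · v⃗`; Cauchy–Schwarz and `|u⃗| < |u₀|` then give
`v₀² ≤ |v⃗|²`. -/
lemma minkowskiForm_self_nonpos_of_orthogonal {u v : Fin 4 → ℝ}
    (hu : 0 < minkowskiForm u u) (huv : minkowskiForm u v = 0) : minkowskiForm v v ≤ 0 := by
  rw [minkowskiForm_apply] at hu huv ⊢
  have cauchySchwarz : (u 1 * v 1 + u 2 * v 2 + u 3 * v 3) ^ 2 ≤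
      (u 1 ^ 2 + u 2 ^ 2 + u 3 ^ 2) * (v 1 ^ 2 + v 2 ^ 2 + v 3 ^ 2) := by
    nlinarith [sq_nonneg (u 1 * v 2 - u 2 * v 1), sq_nonneg (u 1 * v 3 - u 3 * v 1),
      sq_nonneg (u 2 * v 3 - u 3 * v 2)]
  have hu0 : 0 < u 0 ^ 2 := by nlinarith [sq_nonneg (u 1), sq_nonneg (u 2), sq_nonneg (u 3)]
  have hv0 : u 0 ^ 2 * v 0 ^ 2 ≤ u 0 ^ 2 * (v 1 ^ 2 + v 2 ^ 2 + v 3 ^ 2) :=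
    calc u 0 ^ 2 * v 0 ^ 2 = (u 1 * v 1 + u 2 * v 2 + u 3 * v 3) ^ 2 := by
          rw [← mul_pow,
            show u 0 * v 0 = u 1 * v 1 + u 2 * v 2 + u 3 * v 3 by linear_combination huv]
      _ ≤ (u 1 ^ 2 + u 2 ^ 2 + u 3 ^ 2) * (v 1 ^ 2 + v 2 ^ 2 + v 3 ^ 2) := cauchySchwarz
      _ ≤ u 0 ^ 2 * (v 1 ^ 2 + v 2 ^ 2 + v 3 ^ 2) := by gcongr; nlinarith
  nlinarith [le_of_mul_le_mul_left hv0 hu0]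

lemma minkowskiForm_proj_eq_zero {u : Fin 4 → ℝ} (hu : minkowskiForm u u = 1) (ψ : Fin 4 → ℝ) :
    minkowskiForm u (minkowskiProj u ψ) = 0 := by
  rw [minkowskiForm_apply] at hu ⊢
  simp only [minkowskiProj_apply, Fin.sum_univ_four, Matrix.cons_val_zero, Matrix.cons_val_one,
    Matrix.cons_val]
  linear_combination (-(u 0 * ψ 0 + u 1 * ψ 1 + u 2 * ψ 2 + u 3 * ψ 3)) * hu

lemma minkowskiForm_self_eq_sq_add_proj {u : Fin 4 → ℝ} (hu : minkowskiForm u u = 1)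
    (ψ : Fin 4 → ℝ) :
    minkowskiForm ψ ψ =
      (∑ μ, u μ * ψ μ) ^ 2 + minkowskiForm (minkowskiProj u ψ) (minkowskiProj u ψ) := by
  rw [minkowskiForm_apply] at hu
  simp only [minkowskiForm_apply, minkowskiProj_apply, Fin.sum_univ_four, Matrix.cons_val_zero,
    Matrix.cons_val_one, Matrix.cons_val]
  linear_combination (-(u 0 * ψ 0 + u 1 * ψ 1 + u 2 * ψ 2 + u 3 * ψ 3) ^ 2) * hu

lemma add_nonpos_of_characteristic {T c ζ b v : ℝ} (hT : T ≠ 0) (hc : c + ζ / T ≤ 1)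
    (hv : v ≤ 0) (h : T * b + (T * c + ζ) * v = 0) : b + v ≤ 0 := by
  have hb : b = -(c + ζ / T) * v := by
    field_simp
    linear_combination h
  calc b + v = (1 - (c + ζ / T)) * v := by rw [hb]; ring
    _ ≤ 0 := mul_nonpos_of_nonneg_of_nonpos (sub_nonneg.2 hc) hv

theorem MIS_bulk_nonlinear_causality_general (u ψ : Fin 4 → ℝ)
    (hu : ∑ μ, ∑ ν, minkowskiEta μ ν * u μ * u ν = 1)
    (B : ℝ) (hB : B = ∑ μ, u μ * ψ μ)
    (V : Fin 4 → ℝ) (hV : ∀ a, V a = ∑ μ, (minkowskiEta a μ - u a * u μ) * ψ μ)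
    (V2 : ℝ) (hV2 : V2 = ∑ a, ∑ b, minkowskiEta a b * V a * V b)
    (E τ c2 ζ : ℝ) (hE : 0 < E) (hτ : 0 < τ)
    (hcaus1 : c2 + ζ / (τ * E) ≤ 1)
    (hchar : τ * E * B ^ 2 + (τ * c2 * E + ζ) * V2 = 0) :
    (∑ μ, ∑ ν, minkowskiEta μ ν * ψ μ * ψ ν) = B ^ 2 + V2 ∧ B ^ 2 + V2 ≤ 0 := by
  change minkowskiForm u u = 1 at hu
  change V2 = minkowskiForm V V at hV2
  obtain rfl : V = minkowskiProj u ψ := funext hV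
  subst hB hV2
  have hV_spacelike : minkowskiForm (minkowskiProj u ψ) (minkowskiProj u ψ) ≤ 0 :=
    minkowskiForm_self_nonpos_of_orthogonal (hu ▸ one_pos) (minkowskiForm_proj_eq_zero hu ψ)
  exact ⟨minkowskiForm_self_eq_sq_add_proj hu ψ,
    add_nonpos_of_characteristic (mul_ne_zero hτ.ne' hE.ne') hcaus1 hV_spacelike
      (by linear_combination hchar)⟩

/-- Nonlinear causality of the Müller–Israel–Stewart theory with bulk
viscosity.  Let `u` be a unit timelike vector, `ψ` a real covector, `B = u^μψ_μ`,
`V^α = (η^{αμ} − u^αu^μ)ψ_μ`, `V² = η_{αβ}V^αV^β`.  If `E > 0`, `τ > 0`,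
`0 ≤ c² + ζ/(τE) ≤ 1`, and `ψ` satisfies the nontrivial characteristic equation
`τ E B² + (τ c² E + ζ) V² = 0`, then `ψ` is non-timelike:
`η^{μν}ψ_μψ_ν = B² + V² ≤ 0`. -/
theorem MIS_bulk_nonlinear_causality (u ψ : Fin 4 → ℝ)
    (hu : ∑ μ, ∑ ν, minkowskiEta μ ν * u μ * u ν = 1)
    (B : ℝ) (hB : B = ∑ μ, u μ * ψ μ)
    (V : Fin 4 → ℝ) (hV : ∀ a, V a = ∑ μ, (minkowskiEta a μ - u a * u μ) * ψ μ)
    (V2 : ℝ) (hV2 : V2 = ∑ a, ∑ b, minkowskiEta a b * V a * V b)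
    (E τ c2 ζ : ℝ) (hE : 0 < E) (hτ : 0 < τ)
    (hcaus0 : 0 ≤ c2 + ζ / (τ * E)) (hcaus1 : c2 + ζ / (τ * E) ≤ 1)
    (hchar : τ * E * B ^ 2 + (τ * c2 * E + ζ) * V2 = 0) :
    (∑ μ, ∑ ν, minkowskiEta μ ν * ψ μ * ψ ν) = B ^ 2 + V2 ∧ B ^ 2 + V2 ≤ 0 :=
  MIS_bulk_nonlinear_causality_general u ψ hu B hB V hV V2 hV2 E τ c2 ζ hE hτ hcaus1 hchar
end
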